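/- arXiv:1004.5515 — 8 statements merged into one kernel-verified Lean document; each statement's English description precedes it below -/
import Mathlib

section
/- The generator matrix G of a birth-and-death chain on {0,...,N} with strictly positive birth rates b_1,...,b_N, strictly positive death rates d_1,...,d_{N-1}, and d_N = 0 (so N is absorbing) has N+1 distinct real eigenvalues 0 = -λ_0 > -λ_1 > ... > -λ_N. -/
/-
Row `N` of `G` vanishes, so `charpoly G = X * charpoly A` with `A` the restriction of `G` to
`{0, …, N-1}` (the chain killed on hitting `N`). The matrix `A` satisfies detailed balance for
`π k = ∏_{j ≤ k} b j / d j`, so `diag (√π) * A * diag (√π)⁻¹` is symmetric and the spectrum of `A`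
is real. Since all `b` are positive, an eigenvector `f` of `A` is determined by `f 0` through the
recurrence `b (k+1) (f (k+1) - f k) + d k (f (k-1) - f k) = μ f k`; so every eigenspace of the
symmetric matrix is a line and its eigenvalues are simple. If `μ ≥ 0` and `f 0 > 0`, the recurrence
makes `f` nondecreasing, which contradicts the boundary value `f N = 0`: every eigenvalue of `A` is
negative.
-/

open Matrix Polynomial Finset

/-- Generator of a birth-and-death chain on `{0,...,N}`:
`Gf(x) = b_{x+1}(f(x+1)-f(x)) + d_x(f(x-1)-f(x))`, with the conventions
`b_{N+1} = 0` (built in via the `if x < N` in the diagonal term; there is no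
state `N+1`) and `d 0 = 0` (imposed as a hypothesis in the theorems). -/
def bdGen (N : ℕ) (b d : ℕ → ℝ) : Matrix (Fin (N+1)) (Fin (N+1)) ℝ :=
  Matrix.of fun x y =>
    if (y : ℕ) = (x : ℕ) + 1 then b ((x : ℕ) + 1)
    else if (y : ℕ) + 1 = (x : ℕ) then d (x : ℕ)
    else if y = x then -((if (x : ℕ) < N then b ((x : ℕ) + 1) else 0) + d (x : ℕ))
    else 0

namespace Matrix

theorem charmatrix_submatrix_of_injective {R : Type*} [CommRing R] {n m : Type*} [Fintype n]
    [DecidableEq n] [Fintype m] [DecidableEq m] (M : Matrix n n R) {e : m → n}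
    (he : Function.Injective e) :
    charmatrix (M.submatrix e e) = (charmatrix M).submatrix e e := by
  ext i j
  simp [charmatrix_apply, diagonal_apply, he.eq_iff]

theorem charpoly_eq_X_mul_charpoly_submatrix_castSucc {R : Type*} [CommRing R] {n : ℕ}
    (M : Matrix (Fin (n + 1)) (Fin (n + 1)) R) (h : M (Fin.last n) = 0) :
    M.charpoly = X * (M.submatrix Fin.castSucc Fin.castSucc).charpoly := by
  rw [charpoly, det_succ_row _ (Fin.last n), Fintype.sum_eq_single (Fin.last n)]
  · simp [charpoly, charmatrix_submatrix_of_injective _ (Fin.castSucc_injective n), h]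
  · intro j hj
    simp [charmatrix_apply, h, diagonal_apply_ne _ (Ne.symm hj)]

section DetailedBalance

variable {n : Type*} [Fintype n] [DecidableEq n] {A : Matrix n n ℝ} {π : n → ℝ}

theorem isHermitian_diagonal_sqrt_conj (hπ : ∀ i, 0 < π i)
    (hA : ∀ i j, π i * A i j = π j * A j i) :
    (diagonal (fun i => √(π i)) * A * diagonal (fun i => (√(π i))⁻¹)).IsHermitian := by
  ext i j
  have hi := Real.sqrt_pos.2 (hπ i)
  have hj := Real.sqrt_pos.2 (hπ j)
  have key := hA j i
  rw [← Real.sq_sqrt (hπ i).le, ← Real.sq_sqrt (hπ j).le] at key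
  simp only [conjTranspose_apply, star_trivial, mul_diagonal, diagonal_mul]
  field_simp
  linear_combination key

theorem diagonal_inv_mul_diagonal_sqrt (hπ : ∀ i, 0 < π i) :
    diagonal (fun i => (√(π i))⁻¹) * diagonal (fun i => √(π i)) = 1 := by
  rw [diagonal_mul_diagonal, ← diagonal_one]
  exact congrArg diagonal (funext fun i => inv_mul_cancel₀ (Real.sqrt_pos.2 (hπ i)).ne')

theorem charpoly_diagonal_sqrt_conj (hπ : ∀ i, 0 < π i) :
    (diagonal (fun i => √(π i)) * A * diagonal (fun i => (√(π i))⁻¹)).charpoly = A.charpoly := by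
  rw [mul_assoc, charpoly_mul_comm, mul_assoc, diagonal_inv_mul_diagonal_sqrt hπ, mul_one]

theorem exists_eigenvector_of_diagonal_sqrt_conj (hπ : ∀ i, 0 < π i) {μ : ℝ} {w : n → ℝ}
    (hw : (diagonal (fun i => √(π i)) * A * diagonal (fun i => (√(π i))⁻¹)) *ᵥ w = μ • w) :
    ∃ v, A *ᵥ v = μ • v ∧ w = fun i => √(π i) * v i := by
  refine ⟨diagonal (fun i => (√(π i))⁻¹) *ᵥ w, ?_, ?_⟩
  · rw [← mulVec_smul, ← hw, mulVec_mulVec, mulVec_mulVec, ← mul_assoc, ← mul_assoc,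
      diagonal_inv_mul_diagonal_sqrt hπ, one_mul]
  · ext i
    simp [mulVec_diagonal, (Real.sqrt_pos.2 (hπ i)).ne']

end DetailedBalance

namespace IsHermitian

variable {n : Type*} [Fintype n] [DecidableEq n] {S : Matrix n n ℝ}

theorem eigenvalues_injective_of_eigenvector_eq_zero (hS : S.IsHermitian) (i₀ : n)
    (h : ∀ (μ : ℝ) (v : n → ℝ), S *ᵥ v = μ • v → v i₀ = 0 → v = 0) :
    Function.Injective hS.eigenvalues := by
  intro i j hij
  by_contra hne
  have hSi := hS.mulVec_eigenvectorBasis i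
  have hSj := hS.mulVec_eigenvectorBasis j
  set e := hS.eigenvectorBasis
  have he := e.orthonormal
  have hej : e j i₀ ≠ 0 := fun h0 => he.ne_zero j (PiLp.ext (congrFun (h _ _ hSj h0)))
  have hw : e j i₀ • e i - e i i₀ • e j = 0 := by
    refine PiLp.ext (congrFun (h (hS.eigenvalues j) _ ?_ (by simp [mul_comm])))
    simp only [WithLp.ofLp_sub, WithLp.ofLp_smul, mulVec_sub, mulVec_smul, hSi, hSj, hij]
    module
  have := congrArg (inner ℝ (e i)) hw
  rw [inner_sub_right, real_inner_smul_right, real_inner_smul_right] at this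
  simp [he.1 i, he.2 hne, hej] at this

theorem eigenvalues_neg_of_eigenvector_eq_zero (hS : S.IsHermitian)
    (h : ∀ (μ : ℝ) (v : n → ℝ), S *ᵥ v = μ • v → 0 ≤ μ → v = 0) (i : n) :
    hS.eigenvalues i < 0 := by
  by_contra! hi
  exact hS.eigenvectorBasis.orthonormal.ne_zero i
    (PiLp.ext (congrFun (h _ _ (hS.mulVec_eigenvectorBasis i) hi)))

end IsHermitian

end Matrix

/-- At `k = 0` the death term vanishes whatever `d 0` is, since `0 - 1 = 0` in `ℕ`. -/
def BDEigenEquation (N : ℕ) (b d : ℕ → ℝ) (μ : ℝ) (f : ℕ → ℝ) : Prop :=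
  ∀ k < N, b (k + 1) * (f (k + 1) - f k) + d k * (f (k - 1) - f k) = μ * f k

namespace BDEigenEquation

variable {N : ℕ} {b d f : ℕ → ℝ} {μ : ℝ}

theorem eq_zero_of_apply_zero (hf : BDEigenEquation N b d μ f) (hb : ∀ k < N, b (k + 1) ≠ 0)
    (h0 : f 0 = 0) : ∀ k ≤ N, f k = 0 := by
  suffices ∀ k ≤ N, f (k - 1) = 0 ∧ f k = 0 from fun k hk => (this k hk).2
  intro k hk
  induction k with
  | zero => exact ⟨h0, h0⟩
  | succ k ih =>
    obtain ⟨hk₁, hk₂⟩ := ih (by omega)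
    have hrow := hf k (by omega)
    rw [hk₁, hk₂] at hrow
    exact ⟨hk₂, by simpa [hb k (by omega)] using hrow⟩

theorem apply_zero_nonpos (hf : BDEigenEquation N b d μ f) (hb : ∀ k < N, 0 < b (k + 1))
    (hd : ∀ k < N, 0 ≤ d k) (hμ : 0 ≤ μ) (hN : f N = 0) : f 0 ≤ 0 := by
  by_contra! h0
  suffices ∀ k ≤ N, f 0 ≤ f k ∧ f (k - 1) ≤ f k by linarith [(this N le_rfl).1]
  intro k hk
  induction k with
  | zero => exact ⟨le_rfl, le_rfl⟩
  | succ k ih =>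
    obtain ⟨hk₁, hk₂⟩ := ih (by omega)
    have hbk := hb k (by omega)
    have hstep : 0 ≤ b (k + 1) * (f (k + 1) - f k) := by
      nlinarith [hf k (by omega), hd k (by omega)]
    have hinc := (mul_nonneg_iff_of_pos_left hbk).1 hstep
    exact ⟨by linarith, by simpa using hinc⟩

theorem neg (hf : BDEigenEquation N b d μ f) : BDEigenEquation N b d μ (-f) :=
  fun k hk => by simp only [Pi.neg_apply]; linear_combination -hf k hk

end BDEigenEquation

section ZeroExtend

variable {N : ℕ}

def zeroExtend (v : Fin N → ℝ) (k : ℕ) : ℝ := if h : k < N then v ⟨k, h⟩ else 0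

theorem zeroExtend_of_lt (v : Fin N → ℝ) {k : ℕ} (hk : k < N) : zeroExtend v k = v ⟨k, hk⟩ :=
  dif_pos hk

theorem zeroExtend_of_le (v : Fin N → ℝ) {k : ℕ} (hk : N ≤ k) : zeroExtend v k = 0 :=
  dif_neg (by omega)

@[simp]
theorem zeroExtend_val (v : Fin N → ℝ) (k : Fin N) : zeroExtend v k = v k :=
  dif_pos k.isLt

theorem eq_zero_of_zeroExtend_eq_zero {v : Fin N → ℝ} (h : ∀ k ≤ N, zeroExtend v k = 0) :
    v = 0 :=
  funext fun k => by simpa using h k k.isLt.le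

end ZeroExtend

def bdGenKilled (N : ℕ) (b d : ℕ → ℝ) : Matrix (Fin N) (Fin N) ℝ :=
  (bdGen N b d).submatrix Fin.castSucc Fin.castSucc

noncomputable def bdReversibleMeasure (b d : ℕ → ℝ) : ℕ → ℝ
  | 0 => 1
  | k + 1 => bdReversibleMeasure b d k * b (k + 1) / d (k + 1)

section BirthDeath

variable {N : ℕ} {b d : ℕ → ℝ}

theorem bdGen_last_row (hdN : d N = 0) : bdGen N b d (Fin.last N) = 0 := by
  ext j
  simp only [bdGen, of_apply, Fin.val_last, lt_irrefl, if_false, hdN]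
  split_ifs <;> first | omega | simp

theorem bdGenKilled_apply (x y : Fin N) : bdGenKilled N b d x y =
    if (y : ℕ) = x + 1 then b (x + 1) else if (y : ℕ) + 1 = x then d x
    else if y = x then -(b (x + 1) + d x) else 0 := by
  simp [bdGenKilled, bdGen, Fin.castSucc_inj]

theorem bdGenKilled_mulVec_apply (hd0 : d 0 = 0) (v : Fin N → ℝ) (k : Fin N) :
    (bdGenKilled N b d *ᵥ v) k = b (k + 1) * (zeroExtend v (k + 1) - zeroExtend v k)
      + d k * (zeroExtend v (k - 1) - zeroExtend v k) := by
  have hsplit : ∀ j : ℕ, (if j = k + 1 then b (k + 1) else if j + 1 = k then d k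
      else if j = k then -(b (k + 1) + d k) else 0) * zeroExtend v j =
      (if j = k + 1 then b (k + 1) * zeroExtend v j else 0) +
      (if j + 1 = k then d k * zeroExtend v j else 0) +
      (if j = k then -(b (k + 1) + d k) * zeroExtend v j else 0) := by
    intro j
    split_ifs <;> first | omega | ring
  have hup : (if (k : ℕ) + 1 ∈ range N then b (k + 1) * zeroExtend v (k + 1) else 0) =
      b (k + 1) * zeroExtend v (k + 1) := by
    split_ifs with h
    · rfl
    · rw [zeroExtend_of_le v (by simpa using h), mul_zero]
  have hdown : ∑ j ∈ range N, (if j + 1 = k then d k * zeroExtend v j else 0) =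
      d k * zeroExtend v (k - 1) := by
    obtain ⟨k, hk⟩ := k
    cases k with
    | zero => simp [hd0]
    | succ m => simp [sum_ite_eq', show m < N by omega]
  have hsum := Fin.sum_univ_eq_sum_range (fun j => (if j = k + 1 then b (k + 1)
      else if j + 1 = k then d k else if j = k then -(b (k + 1) + d k) else 0) * zeroExtend v j) N
  simp only [zeroExtend_val, Fin.val_inj] at hsum
  rw [mulVec, dotProduct]
  simp only [bdGenKilled_apply]
  rw [hsum, sum_congr rfl fun j _ => hsplit j, sum_add_distrib, sum_add_distrib, sum_ite_eq',
    sum_ite_eq', hup, hdown, if_pos (mem_range.2 k.isLt)]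
  ring

theorem bdEigenEquation_zeroExtend (hd0 : d 0 = 0) {μ : ℝ} {v : Fin N → ℝ}
    (hv : bdGenKilled N b d *ᵥ v = μ • v) : BDEigenEquation N b d μ (zeroExtend v) :=
  fun k hk => by
    simpa [bdGenKilled_mulVec_apply hd0, zeroExtend_of_lt v hk] using congrFun hv ⟨k, hk⟩

theorem bdGenKilled_eigenvector_eq_zero_of_apply_zero (hb : ∀ k < N, 0 < b (k + 1))
    (hd0 : d 0 = 0) {μ : ℝ} {v : Fin N → ℝ} (hv : bdGenKilled N b d *ᵥ v = μ • v)
    (h0 : zeroExtend v 0 = 0) : v = 0 :=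
  eq_zero_of_zeroExtend_eq_zero <|
    (bdEigenEquation_zeroExtend hd0 hv).eq_zero_of_apply_zero (fun k hk => (hb k hk).ne') h0

theorem bdGenKilled_eigenvector_eq_zero_of_nonneg (hb : ∀ k < N, 0 < b (k + 1))
    (hd : ∀ k, 0 < k → k < N → 0 < d k) (hd0 : d 0 = 0) {μ : ℝ} (hμ : 0 ≤ μ) {v : Fin N → ℝ}
    (hv : bdGenKilled N b d *ᵥ v = μ • v) : v = 0 := by
  have hd' : ∀ k < N, 0 ≤ d k := fun k hk => by
    rcases k.eq_zero_or_pos with rfl | hk₀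
    exacts [hd0.ge, (hd k hk₀ hk).le]
  have hf := bdEigenEquation_zeroExtend hd0 hv
  have hN := zeroExtend_of_le v le_rfl
  have h₁ := hf.apply_zero_nonpos hb hd' hμ hN
  have h₂ := hf.neg.apply_zero_nonpos hb hd' hμ (by simp [hN])
  exact bdGenKilled_eigenvector_eq_zero_of_apply_zero hb hd0 hv (le_antisymm h₁ (neg_nonpos.1 h₂))

theorem bdReversibleMeasure_pos (hb : ∀ k < N, 0 < b (k + 1))
    (hd : ∀ k, 0 < k → k < N → 0 < d k) : ∀ k < N, 0 < bdReversibleMeasure b d k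
  | 0, _ => one_pos
  | k + 1, hk => by
    have := bdReversibleMeasure_pos hb hd k (by omega)
    have := hb k (by omega)
    have := hd (k + 1) (by omega) hk
    rw [bdReversibleMeasure]
    positivity

theorem bdReversibleMeasure_mul_birth {k : ℕ} (hk : d (k + 1) ≠ 0) :
    bdReversibleMeasure b d k * b (k + 1) = bdReversibleMeasure b d (k + 1) * d (k + 1) := by
  rw [bdReversibleMeasure]
  field_simp

theorem bdReversibleMeasure_detailed_balance (hd : ∀ k, 0 < k → k < N → 0 < d k) (x y : Fin N) :
    bdReversibleMeasure b d x * bdGenKilled N b d x y =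
      bdReversibleMeasure b d y * bdGenKilled N b d y x := by
  have hdy := hd y
  have hdx := hd x
  simp only [bdGenKilled_apply]
  split_ifs with hyx _ _ _ hxy <;> try omega
  · rw [hyx] at hdy ⊢
    exact bdReversibleMeasure_mul_birth (hdy (by omega) (by omega)).ne'
  · rw [← hxy] at hdx ⊢
    exact (bdReversibleMeasure_mul_birth (hdx (by omega) (by omega)).ne').symm
  · subst_vars; rfl
  · simp

theorem exists_charpoly_bdGenKilled_eq_prod (hN : 0 < N) (hb : ∀ k < N, 0 < b (k + 1))
    (hd : ∀ k, 0 < k → k < N → 0 < d k) (hd0 : d 0 = 0) :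
    ∃ lam : Fin N → ℝ, (∀ i, 0 < lam i) ∧ StrictMono lam ∧
      (bdGenKilled N b d).charpoly = ∏ i, (X - C (-lam i)) := by
  have hπ : ∀ x : Fin N, 0 < bdReversibleMeasure b d x :=
    fun x => bdReversibleMeasure_pos hb hd x x.isLt
  have hS := isHermitian_diagonal_sqrt_conj hπ (bdReversibleMeasure_detailed_balance hd)
  have hneg := hS.eigenvalues_neg_of_eigenvector_eq_zero fun μ w hw hμ => by
    obtain ⟨v, hv, rfl⟩ := exists_eigenvector_of_diagonal_sqrt_conj hπ hw
    ext i
    simp [bdGenKilled_eigenvector_eq_zero_of_nonneg hb hd hd0 hμ hv]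
  have hinj := hS.eigenvalues_injective_of_eigenvector_eq_zero ⟨0, hN⟩ fun μ w hw h0 => by
    obtain ⟨v, hv, rfl⟩ := exists_eigenvector_of_diagonal_sqrt_conj hπ hw
    have hv0 : zeroExtend v 0 = 0 := by
      rw [zeroExtend_of_lt v hN]
      exact (mul_eq_zero.1 h0).resolve_left (Real.sqrt_pos.2 (hπ _)).ne'
    ext i
    simp [bdGenKilled_eigenvector_eq_zero_of_apply_zero hb hd0 hv hv0]
  set σ := Tuple.sort fun i => -hS.eigenvalues i
  refine ⟨fun i => -hS.eigenvalues (σ i), fun i => neg_pos.2 (hneg _), ?_, ?_⟩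
  · exact (Tuple.monotone_sort _).strictMono_of_injective
      ((neg_injective.comp hinj).comp σ.injective)
  · rw [← charpoly_diagonal_sqrt_conj hπ, hS.charpoly_eq, ← Equiv.prod_comp σ]
    simp

end BirthDeath

/-- The generator of a birth-and-death chain on `{0,...,N}` absorbed at `N`
has `N+1` distinct real eigenvalues `0 = -λ_0 > -λ_1 > ... > -λ_N`. -/
theorem stmt0 (N : ℕ) (hN : 1 ≤ N) (b d : ℕ → ℝ)
    (hb : ∀ x, 1 ≤ x → x ≤ N → 0 < b x)
    (hd : ∀ x, 1 ≤ x → x ≤ N - 1 → 0 < d x)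
    (hd0 : d 0 = 0) (hdN : d N = 0) :
    ∃ lam : Fin (N+1) → ℝ, lam 0 = 0 ∧ StrictMono lam ∧
      (bdGen N b d).charpoly = ∏ i : Fin (N+1), (X - C (-lam i)) := by
  obtain ⟨lam, hpos, hmono, hchar⟩ := exists_charpoly_bdGenKilled_eq_prod hN
    (fun k hk => hb _ (by omega) (by omega)) (fun k h₁ h₂ => hd k h₁ (by omega)) hd0
  refine ⟨Fin.cons 0 lam, rfl, Fin.strictMono_cons.2 ⟨hpos, hmono⟩, ?_⟩
  rw [charpoly_eq_X_mul_charpoly_submatrix_castSucc _ (bdGen_last_row hdN), ← bdGenKilled, hchar,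
    Fin.prod_univ_succ]
  simp
end

section
/- There exist λ > 0 and a function f : {0,...,N} → ℝ such that f is strictly decreasing, f(0) = 1, f(N) = 0, and Gf = -λf. -/
open Matrix Polynomial Finset

lemma exists_pos_forall_nonneg_exists_eq_zero {ι : Type*} {s : Finset ι}
    {F : ι → ℝ → ℝ} (hF : ∀ i ∈ s, Continuous (F i)) (h0 : ∀ i ∈ s, 0 < F i 0)
    {t₀ : ℝ} (ht₀ : 0 ≤ t₀) {i₀ : ι} (hi₀ : i₀ ∈ s) (hneg : F i₀ t₀ ≤ 0) :
    ∃ t, 0 < t ∧ (∀ i ∈ s, 0 ≤ F i t) ∧ ∃ i ∈ s, F i t = 0 := by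
  have hs : s.Nonempty := ⟨i₀, hi₀⟩
  set g : ℝ → ℝ := fun t => s.inf' hs fun i => F i t
  have hg0 : 0 < g 0 := (lt_inf'_iff hs).2 h0
  have hgt₀ : g t₀ ≤ 0 := (inf'_le _ hi₀).trans hneg
  obtain ⟨t, ⟨ht0, -⟩, hgt⟩ := intermediate_value_Icc' ht₀
    (Continuous.finset_inf'_apply hs hF).continuousOn ⟨hgt₀, hg0.le⟩
  refine ⟨t, ht0.lt_of_ne ?_, (le_inf'_iff hs _).1 hgt.ge, ?_⟩
  · rintro rfl
    exact hg0.ne' hgt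
  · obtain ⟨i, hi, hgi⟩ := exists_mem_eq_inf' hs fun i => F i t
    exact ⟨i, hi, hgi ▸ hgt⟩

lemma bdGen_mulVec_apply {N : ℕ} {b d : ℕ → ℝ} (hd0 : d 0 = 0) (g : ℕ → ℝ)
    (x : Fin (N + 1)) :
    (bdGen N b d *ᵥ fun i => g i) x =
      (if (x : ℕ) < N then b (x + 1) * (g (x + 1) - g x) else 0) + d x * (g (x - 1) - g x) := by
  set e : ℕ → ℝ := fun y =>
    (if y = x + 1 then b (x + 1) * g (x + 1) else 0)
      + (if y = x - 1 ∧ 0 < (x : ℕ) then d x * g (x - 1) else 0)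
      + (if y = x then -((if (x : ℕ) < N then b (x + 1) else 0) + d x) * g x else 0)
  have hentry : ∀ y : Fin (N + 1), bdGen N b d x y * g y = e y := by
    intro y
    simp only [bdGen, of_apply, Fin.ext_iff, e]
    split_ifs <;> first | omega | simp_all
  simp only [mulVec, dotProduct, hentry]
  rw [Fin.sum_univ_eq_sum_range e]
  simp only [e, sum_add_distrib, ite_and, sum_ite_eq', mem_range]
  have hx := x.isLt
  rcases Nat.eq_zero_or_pos (x : ℕ) with hx0 | hxpos
  · simp only [hx0, hd0]
    split_ifs <;> first | omega | ring1
  · split_ifs <;> first | omega | ring1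

noncomputable def bdShoot (b d : ℕ → ℝ) (lam : ℝ) : ℕ → ℝ
  | 0 => 1
  | 1 => 1 - lam / b 1
  | x + 2 => bdShoot b d lam (x + 1) +
      (d (x + 1) * (bdShoot b d lam (x + 1) - bdShoot b d lam x)
        - lam * bdShoot b d lam (x + 1)) / b (x + 2)

section

variable {b d : ℕ → ℝ} {lam : ℝ}

lemma bdShoot_flux (x : ℕ) (hb : b (x + 1) ≠ 0) :
    b (x + 1) * (bdShoot b d lam x - bdShoot b d lam (x + 1)) =
      lam * bdShoot b d lam x + d x * (bdShoot b d lam (x - 1) - bdShoot b d lam x) := by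
  cases x with
  | zero => simp only [zero_add, Nat.zero_sub, bdShoot] at hb ⊢; field_simp; ring
  | succ x => simp only [bdShoot, Nat.add_sub_cancel]; field_simp; ring

lemma continuous_bdShoot (x : ℕ) : Continuous fun lam => bdShoot b d lam x := by
  induction x using Nat.twoStepInduction with
  | zero => exact continuous_const
  | one => simp only [bdShoot]; fun_prop
  | more x ih ih' => simp only [bdShoot]; fun_prop

lemma bdShoot_lam_zero (x : ℕ) : bdShoot b d 0 x = 1 := by
  induction x using Nat.twoStepInduction with
  | zero => rfl
  | one => simp [bdShoot]
  | more x ih ih' => simp [bdShoot, ih, ih']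

lemma bdShoot_one_lam_b_one (hb : b 1 ≠ 0) : bdShoot b d (b 1) 1 = 0 := by
  simp [bdShoot, hb]

lemma bdShoot_succ_lt_of_nonneg {N : ℕ} (hlam : 0 < lam) (hb : ∀ x, 1 ≤ x → x ≤ N → 0 < b x)
    (hd : ∀ x, 1 ≤ x → x ≤ N - 1 → 0 < d x) (hnonneg : ∀ x ≤ N, 0 ≤ bdShoot b d lam x) :
    ∀ x < N, bdShoot b d lam (x + 1) < bdShoot b d lam x := by
  have of_flux_pos : ∀ x < N,
      0 < lam * bdShoot b d lam x + d x * (bdShoot b d lam (x - 1) - bdShoot b d lam x) →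
        bdShoot b d lam (x + 1) < bdShoot b d lam x := fun x hx hflux => by
    have hbx := hb (x + 1) (by omega) hx
    exact sub_pos.mp (pos_of_mul_pos_right ((bdShoot_flux x hbx.ne').symm ▸ hflux) hbx.le)
  intro x hx
  induction x with
  | zero => exact of_flux_pos 0 hx (by simpa [bdShoot] using hlam)
  | succ n ih =>
    refine of_flux_pos _ hx ?_
    rw [Nat.add_sub_cancel]
    exact add_pos_of_nonneg_of_pos (mul_nonneg hlam.le (hnonneg _ hx.le))
      (mul_pos (hd _ le_add_self (by omega)) (sub_pos.mpr (ih (by omega))))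

end

/-- There exist `λ > 0` and `f` strictly decreasing with `f(0) = 1`, `f(N) = 0`
and `Gf = -λ f`. -/
theorem stmt2 (N : ℕ) (hN : 1 ≤ N) (b d : ℕ → ℝ)
    (hb : ∀ x, 1 ≤ x → x ≤ N → 0 < b x)
    (hd : ∀ x, 1 ≤ x → x ≤ N - 1 → 0 < d x)
    (hd0 : d 0 = 0) (hdN : d N = 0) :
    ∃ (lam : ℝ) (f : Fin (N+1) → ℝ), 0 < lam ∧ StrictAnti f ∧
      f 0 = 1 ∧ f (Fin.last N) = 0 ∧
      (bdGen N b d).mulVec f = -lam • f := by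
  have hb1 := hb 1 le_rfl hN
  obtain ⟨lam, hlam, hnonneg, x₀, hx₀, hzero⟩ :=
    exists_pos_forall_nonneg_exists_eq_zero (F := fun x lam => bdShoot b d lam x)
      (fun x _ => continuous_bdShoot x)
      (fun x _ => by simp [bdShoot_lam_zero]) hb1.le (mem_range.2 (Nat.succ_lt_succ hN))
      (bdShoot_one_lam_b_one (d := d) hb1.ne').le
  simp only [mem_range, Nat.lt_succ_iff] at hnonneg hx₀
  have hdec := bdShoot_succ_lt_of_nonneg hlam hb hd hnonneg
  have hx₀N : x₀ = N := by
    by_contra hne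
    linarith [hdec x₀ (by omega), hnonneg (x₀ + 1) (by omega)]
  rw [hx₀N] at hzero
  refine ⟨lam, fun i => bdShoot b d lam i, hlam, ?_, rfl, hzero, ?_⟩
  · exact Fin.strictAnti_iff_succ_lt.2 fun i => hdec i i.isLt
  · ext x
    rw [bdGen_mulVec_apply hd0]
    simp only [Pi.smul_apply, smul_eq_mul]
    split_ifs with hx
    · linarith [bdShoot_flux (d := d) (lam := lam) x (hb (x + 1) (by omega) hx).ne']
    · simp [show (x : ℕ) = N by omega, hdN, hzero]
end

section
/- There exist λ > 0 and a vector π : {0,...,N} → ℝ with π(x) > 0 for 0 ≤ x ≤ N-1, Σ_{x=0}^{N-1} π(x) = 1, π(N) = -1, and G†π = -λπ, where G† is the transpose of G. -/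
open Matrix Polynomial Finset

/-!
Write `J x = b (x+1) π x - d (x+1) π (x+1)` for the flux across the edge `{x, x+1}`.
Since `d 0 = 0`, column `y` of `π G` is `J (y-1) - J y` (read `J (-1) = J N = 0`), so
`G†π = -λπ` amounts to `J x = λ ∑_{i ≤ x} π i` for `x < N` together with `∑_{i ≤ N} π i = 0`.

Starting from `p 0 = 1`, these flux equations determine `p 1, …, p (N-1)` as continuous functions of
`λ` (shooting): `d (x+1) p (x+1)` equals the excess `b (x+1) p x - λ ∑_{i ≤ x} p i`. At `λ = 0` all
excesses are positive; at `λ = b 1` the first one vanishes. At the first `λ` where some excess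
vanishes, all others are still `≥ 0`; a zero excess at an interior edge would make the next mass
zero and hence the next excess `-λ ∑ p < 0`. So only the excess at the edge `{N-1, N}` vanishes,
which (as `d N = 0`) is exactly the last flux equation, and all of `p 0, …, p (N-1)` are positive.
Normalising `p` to total mass `1` and setting `π N = -1` gives the eigenvector.
-/

lemma exists_pos_all_nonneg_some_eq_zero {ι : Type*} (s : Finset ι) (f : ι → ℝ → ℝ)
    (hf : ∀ i ∈ s, Continuous (f i)) (h0 : ∀ i ∈ s, 0 < f i 0)
    (hne : ∃ a, 0 ≤ a ∧ ∃ i ∈ s, f i a ≤ 0) :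
    ∃ l, 0 < l ∧ (∀ i ∈ s, 0 ≤ f i l) ∧ ∃ i ∈ s, f i l = 0 := by
  set Z := Set.Ici (0 : ℝ) ∩ ⋃ i ∈ s, f i ⁻¹' Set.Iic 0
  have hmem : ∀ a, a ∈ Z ↔ 0 ≤ a ∧ ∃ i ∈ s, f i a ≤ 0 := by simp [Z]
  have hclosed : IsClosed Z :=
    isClosed_Ici.inter (isClosed_biUnion_finset fun i hi => isClosed_Iic.preimage (hf i hi))
  have hbdd : BddBelow Z := ⟨0, fun a ha => ((hmem a).1 ha).1⟩
  obtain ⟨a, ha⟩ := hne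
  obtain ⟨hl0, i, hi, hfi⟩ := (hmem _).1 (hclosed.csInf_mem ⟨a, (hmem a).2 ha⟩ hbdd)
  have hnonneg : ∀ j ∈ s, 0 ≤ f j (sInf Z) := by
    intro j hj
    by_contra! hneg
    obtain ⟨t, ⟨ht0, htl⟩, hft⟩ :=
      intermediate_value_Icc' hl0 (hf j hj).continuousOn ⟨hneg.le, (h0 j hj).le⟩
    have hlt : sInf Z ≤ t := csInf_le hbdd ((hmem t).2 ⟨ht0, j, hj, hft.le⟩)
    rw [le_antisymm htl hlt] at hft
    linarith
  refine ⟨sInf Z, lt_of_le_of_ne hl0 fun h => ?_, hnonneg, i, hi,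
    le_antisymm hfi (hnonneg i hi)⟩
  rw [← h] at hfi
  linarith [h0 i hi]

lemma sum_fin_ite_val_eq (n m : ℕ) (c : ℝ) :
    ∑ x : Fin n, (if (x : ℕ) = m then c else 0) = if m < n then c else 0 := by
  rw [Fin.sum_univ_eq_sum_range (fun x => if x = m then c else 0), sum_ite_eq']
  simp only [mem_range]

namespace BirthDeath

def flux (b d P : ℕ → ℝ) (x : ℕ) : ℝ := b (x + 1) * P x - d (x + 1) * P (x + 1)

variable {N : ℕ} {b d : ℕ → ℝ}

lemma mul_bdGen_apply (P : ℕ → ℝ) (x y : Fin (N + 1)) :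
    P x * bdGen N b d x y =
      (if (x : ℕ) = y - 1 then (if (y : ℕ) = 0 then 0 else P (y - 1) * b y) else 0)
      + (if (x : ℕ) = y + 1 then P (y + 1) * d (y + 1) else 0)
      - (if (x : ℕ) = y then P y * ((if (y : ℕ) < N then b (y + 1) else 0) + d y) else 0) := by
  obtain ⟨x, hx⟩ := x
  obtain ⟨y, hy⟩ := y
  simp only [bdGen, of_apply, Fin.mk.injEq]
  split_ifs <;> subst_vars <;> first | ring1 | omega | (rw [Nat.sub_add_cancel (by omega)]; ring1)

lemma vecMul_bdGen_apply (hd0 : d 0 = 0) (P : ℕ → ℝ) (y : Fin (N + 1)) :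
    vecMul (fun x : Fin (N + 1) => P x) (bdGen N b d) y =
      (if (y : ℕ) = 0 then 0 else flux b d P (y - 1))
        - (if (y : ℕ) = N then 0 else flux b d P y) := by
  simp only [vecMul, dotProduct, mul_bdGen_apply, sum_add_distrib, sum_sub_distrib,
    sum_fin_ite_val_eq]
  obtain ⟨y, hy⟩ := y
  simp only [flux]
  split_ifs <;> first
    | omega
    | (subst_vars; simp only [hd0]; ring1)
    | (rw [Nat.sub_add_cancel (by omega)]; ring1)

lemma vecMul_bdGen_eq_neg_smul (hd0 : d 0 = 0) (P : ℕ → ℝ) (l : ℝ)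
    (hflux : ∀ x < N, flux b d P x = l * ∑ i ∈ range (x + 1), P i)
    (hsum : ∑ i ∈ range (N + 1), P i = 0) :
    vecMul (fun x : Fin (N + 1) => P x) (bdGen N b d) = -l • fun x : Fin (N + 1) => P x := by
  funext y
  have hin : (if (y : ℕ) = 0 then 0 else flux b d P (y - 1)) = l * ∑ i ∈ range y, P i := by
    split_ifs with h
    · simp [h]
    · rw [hflux _ (by omega), Nat.sub_add_cancel (by omega)]
  have hout : (if (y : ℕ) = N then 0 else flux b d P y) = l * ∑ i ∈ range (y + 1), P i := by
    split_ifs with h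
    · rw [h, hsum, mul_zero]
    · exact hflux _ (by omega)
  rw [vecMul_bdGen_apply hd0, hin, hout, sum_range_succ, Pi.smul_apply, smul_eq_mul]
  ring

lemma sum_filter_val_lt (f : ℕ → ℝ) :
    ∑ x ∈ univ.filter (fun x : Fin (N + 1) => (x : ℕ) < N), f x = ∑ i ∈ range N, f i := by
  rw [sum_filter, Fin.sum_univ_eq_sum_range (fun i => if i < N then f i else 0),
    sum_range_succ, if_neg (lt_irrefl N), add_zero]
  exact sum_congr rfl fun i hi => if_pos (mem_range.1 hi)

/-- `shoot b d l x = (p x, ∑ i ≤ x, p i)` for the profile with `p 0 = 1` solved edge by edge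
from `flux b d p x = l * ∑ i ≤ x, p i`; `shootExcess b d l x = d (x + 1) * p (x + 1)` is what that
equation leaves for the mass beyond the edge `{x, x + 1}`. -/
noncomputable def shoot (b d : ℕ → ℝ) (l : ℝ) : ℕ → ℝ × ℝ
  | 0 => (1, 1)
  | x + 1 =>
    let q := shoot b d l x
    let m := (b (x + 1) * q.1 - l * q.2) / d (x + 1)
    (m, q.2 + m)

noncomputable def shootExcess (b d : ℕ → ℝ) (l : ℝ) (x : ℕ) : ℝ :=
  b (x + 1) * (shoot b d l x).1 - l * (shoot b d l x).2

lemma shoot_succ_fst (l : ℝ) (x : ℕ) :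
    (shoot b d l (x + 1)).1 = shootExcess b d l x / d (x + 1) := rfl

lemma shoot_snd_eq_sum (l : ℝ) (x : ℕ) :
    (shoot b d l x).2 = ∑ i ∈ range (x + 1), (shoot b d l i).1 := by
  induction x with
  | zero => simp [shoot]
  | succ x ih => rw [sum_range_succ, ← ih]; rfl

lemma continuous_shoot (x : ℕ) : Continuous fun l => shoot b d l x := by
  induction x with
  | zero => exact continuous_const
  | succ x ih => simp only [shoot]; fun_prop

lemma continuous_shootExcess (x : ℕ) : Continuous fun l => shootExcess b d l x := by
  have := continuous_shoot (b := b) (d := d) x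
  simp only [shootExcess]; fun_prop

lemma flux_shoot (l : ℝ) (x : ℕ) (hx : d (x + 1) = 0 → shootExcess b d l x = 0) :
    flux b d (fun i => (shoot b d l i).1) x = l * (shoot b d l x).2 := by
  rw [flux, shoot_succ_fst]
  by_cases h : d (x + 1) = 0
  · rw [h, zero_mul, sub_zero, ← sub_eq_zero, ← hx h, shootExcess]
  · rw [mul_div_cancel₀ _ h, shootExcess]
    ring

lemma shoot_fst_pos (l : ℝ) (n : ℕ) (hd : ∀ x, 1 ≤ x → x ≤ n → 0 < d x)
    (h : ∀ k < n, 0 < shootExcess b d l k) : ∀ x ≤ n, 0 < (shoot b d l x).1 := by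
  intro x hx
  cases x with
  | zero => simp [shoot]
  | succ x => exact shoot_succ_fst (b := b) l x ▸ div_pos (h x (by omega)) (hd _ (by omega) hx)

lemma shootExcess_zero_pos (hb : ∀ x, 1 ≤ x → x ≤ N → 0 < b x)
    (hd : ∀ x, 1 ≤ x → x ≤ N - 1 → 0 < d x) : ∀ k < N, 0 < shootExcess b d 0 k := by
  intro k hk
  induction k with
  | zero => simpa [shootExcess, shoot] using hb 1 le_rfl hk
  | succ k ih =>
    simp only [shootExcess, zero_mul, sub_zero, shoot_succ_fst] at ih ⊢
    exact mul_pos (hb _ (by omega) (by omega))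
      (div_pos (ih (by omega)) (hd _ (by omega) (by omega)))

lemma exists_shootExcess_root (hN : 1 ≤ N) (hb : ∀ x, 1 ≤ x → x ≤ N → 0 < b x)
    (hd : ∀ x, 1 ≤ x → x ≤ N - 1 → 0 < d x) :
    ∃ l, 0 < l ∧ (∀ k < N - 1, 0 < shootExcess b d l k) ∧
      shootExcess b d l (N - 1) = 0 := by
  obtain ⟨l, hl, hnonneg, hzero⟩ := exists_pos_all_nonneg_some_eq_zero (range N)
    (fun k l => shootExcess b d l k) (fun k _ => continuous_shootExcess k)
    (fun k hk => shootExcess_zero_pos hb hd k (mem_range.1 hk))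
    ⟨b 1, (hb 1 le_rfl hN).le, 0, mem_range.2 hN, by simp [shootExcess, shoot]⟩
  classical
  have hex : ∃ k, k < N ∧ shootExcess b d l k = 0 := by simpa using hzero
  obtain ⟨hkN, hk⟩ := Nat.find_spec hex
  set k := Nat.find hex
  have hbefore : ∀ j < k, 0 < shootExcess b d l j := fun j hj =>
    (hnonneg j (mem_range.2 (by omega))).lt_of_ne fun h =>
      Nat.find_min hex hj ⟨by omega, h.symm⟩
  have hk_last : k = N - 1 := by
    by_contra hne
    have hS : 0 < (shoot b d l (k + 1)).2 := by
      rw [shoot_snd_eq_sum, sum_range_succ, shoot_succ_fst, hk, zero_div, add_zero]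
      exact sum_pos (fun x hx => shoot_fst_pos l k (fun x h1 h2 => hd x h1 (by omega)) hbefore x
        (by simp at hx; omega)) nonempty_range_add_one
    have hneg : shootExcess b d l (k + 1) < 0 := by
      rw [shootExcess, shoot_succ_fst, hk, zero_div, mul_zero, zero_sub, neg_neg_iff_pos]
      exact mul_pos hl hS
    exact (hnonneg (k + 1) (mem_range.2 (by omega))).not_gt hneg
  exact ⟨l, hl, fun j hj => hbefore j (by omega), hk_last ▸ hk⟩

lemma exists_flux_balanced_profile (hN : 1 ≤ N) (hb : ∀ x, 1 ≤ x → x ≤ N → 0 < b x)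
    (hd : ∀ x, 1 ≤ x → x ≤ N - 1 → 0 < d x) :
    ∃ l, 0 < l ∧ ∃ p : ℕ → ℝ, (∀ x < N, 0 < p x) ∧
      ∀ x < N, flux b d p x = l * ∑ i ∈ range (x + 1), p i := by
  obtain ⟨l, hl, hpos, hroot⟩ := exists_shootExcess_root hN hb hd
  refine ⟨l, hl, fun x => (shoot b d l x).1,
    fun x hx => shoot_fst_pos l (N - 1) hd hpos x (by omega), fun x hx => ?_⟩
  rw [flux_shoot, shoot_snd_eq_sum]
  intro hdx
  obtain rfl : x = N - 1 := by
    by_contra h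
    exact (hd (x + 1) (by omega) (by omega)).ne' hdx
  exact hroot

end BirthDeath

/-- There exist `λ > 0` and `π` with `π > 0` on `{0,...,N-1}`,
`Σ_{x<N} π(x) = 1`, `π(N) = -1` and `G†π = -λπ` (`G†` the transpose of `G`). -/
theorem stmt3 (N : ℕ) (hN : 1 ≤ N) (b d : ℕ → ℝ)
    (hb : ∀ x, 1 ≤ x → x ≤ N → 0 < b x)
    (hd : ∀ x, 1 ≤ x → x ≤ N - 1 → 0 < d x)
    (hd0 : d 0 = 0) (hdN : d N = 0) :
    ∃ (lam : ℝ) (π : Fin (N+1) → ℝ), 0 < lam ∧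
      (∀ x : Fin (N+1), (x : ℕ) < N → 0 < π x) ∧
      (∑ x ∈ Finset.univ.filter (fun x : Fin (N+1) => (x : ℕ) < N), π x) = 1 ∧
      π (Fin.last N) = -1 ∧
      Matrix.vecMul π (bdGen N b d) = -lam • π := by
  obtain ⟨l, hl, p, hp, hflux⟩ := BirthDeath.exists_flux_balanced_profile hN hb hd
  set c := ∑ i ∈ range N, p i
  have hc : 0 < c := sum_pos (fun i hi => hp i (mem_range.1 hi)) (nonempty_range_iff.2 (by omega))
  set P : ℕ → ℝ := fun x => if x < N then p x / c else -1
  have hPsum : ∀ n ≤ N, ∑ i ∈ range n, P i = (∑ i ∈ range n, p i) / c := fun n hn => by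
    rw [sum_div]
    exact sum_congr rfl fun i hi => if_pos (by simp at hi; omega)
  refine ⟨l, fun x => P x, hl, fun x hx => ?_, ?_, if_neg (by simp), ?_⟩
  · simp only [P, if_pos hx]
    exact div_pos (hp x hx) hc
  · rw [BirthDeath.sum_filter_val_lt, hPsum N le_rfl, div_self hc.ne']
  · refine BirthDeath.vecMul_bdGen_eq_neg_smul hd0 P l (fun x hx => ?_) ?_
    · have hPflux : BirthDeath.flux b d P x = BirthDeath.flux b d p x / c := by
        simp only [BirthDeath.flux, P, if_pos hx]
        split_ifs with h
        · ring
        · rw [show x + 1 = N by omega, hdN]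
          ring
      rw [hPflux, hflux x hx, hPsum (x + 1) hx]
      ring
    · rw [sum_range_succ, hPsum N le_rfl, div_self hc.ne']
      simp [P]
end

section
/- If f : {0,...,N} → ℝ satisfies Gf = -λf with λ > 0, f > 0 on {0,...,N-1}, and f(N) = 0, then f is strictly decreasing on {0,...,N}. -/
open Matrix Polynomial Finset

lemma bdGen_row_sum (N : ℕ) (b d : ℕ → ℝ) (hd0 : d 0 = 0) (f : Fin (N+1) → ℝ)
    (x : ℕ) (hx : x < N) :
    ∑ y : Fin (N+1), bdGen N b d ⟨x, by omega⟩ y * f y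
      = b (x+1) * f ⟨x+1, by omega⟩ + d x * f ⟨x-1, by omega⟩
        + (-(b (x+1) + d x)) * f ⟨x, by omega⟩ := by
  have hsplit : ∀ y : Fin (N+1),
      bdGen N b d ⟨x, by omega⟩ y * f y
        = (if y = (⟨x+1, by omega⟩ : Fin (N+1)) then b (x+1) * f y else 0)
          + (if y = (⟨x-1, by omega⟩ : Fin (N+1)) then d x * f y else 0)
          + (if y = (⟨x, by omega⟩ : Fin (N+1)) then (-(b (x+1) + d x)) * f y else 0) := by
    intro y
    simp only [bdGen, Matrix.of_apply, Fin.ext_iff, hx, if_true]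
    rcases Nat.eq_zero_or_pos x with hx0 | hx0
    · subst hx0
      simp only [hd0]
      split_ifs <;> first | (exfalso; first | assumption | omega) | ring
    · split_ifs <;> first | (exfalso; first | assumption | omega) | ring
  rw [Finset.sum_congr rfl (fun y _ => hsplit y)]
  rw [Finset.sum_add_distrib, Finset.sum_add_distrib,
    Finset.sum_ite_eq' _ _ (fun y => b (x+1) * f y),
    Finset.sum_ite_eq' _ _ (fun y => d x * f y),
    Finset.sum_ite_eq' _ _ (fun y => (-(b (x+1) + d x)) * f y)]
  simp

/-- If `Gf = -λf` with `λ > 0`, `f > 0` on `{0,...,N-1}` and `f(N) = 0`,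
then `f` is strictly decreasing. -/
theorem stmt4 (N : ℕ) (hN : 1 ≤ N) (b d : ℕ → ℝ)
    (hb : ∀ x, 1 ≤ x → x ≤ N → 0 < b x)
    (hd : ∀ x, 1 ≤ x → x ≤ N - 1 → 0 < d x)
    (hd0 : d 0 = 0) (hdN : d N = 0)
    (lam : ℝ) (hlam : 0 < lam) (f : Fin (N+1) → ℝ)
    (hfpos : ∀ x : Fin (N+1), (x : ℕ) < N → 0 < f x)
    (hfN : f (Fin.last N) = 0)
    (hGf : (bdGen N b d).mulVec f = -lam • f) :
    StrictAnti f := by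
  have key : ∀ x : ℕ, ∀ hx : x < N, f ⟨x+1, by omega⟩ < f ⟨x, by omega⟩ := by
    intro x
    induction x using Nat.strong_induction_on with
    | _ x ih =>
      intro hx
      have heq := congrFun hGf ⟨x, by omega⟩
      rw [Matrix.mulVec, dotProduct] at heq
      rw [bdGen_row_sum N b d hd0 f x hx] at heq
      simp only [Pi.smul_apply, Pi.neg_apply, smul_eq_mul, neg_mul] at heq
      -- b(x+1) * (f x - f (x+1)) = lam * f x + d x * (f (x-1) - f x)
      have hfx : 0 < f ⟨x, by omega⟩ := hfpos ⟨x, by omega⟩ hx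
      have hbpos : 0 < b (x+1) := hb (x+1) (by omega) (by omega)
      have hrhs : 0 < lam * f ⟨x, by omega⟩ + d x * (f ⟨x-1, by omega⟩ - f ⟨x, by omega⟩) := by
        rcases Nat.eq_zero_or_pos x with hx0 | hx0
        · subst hx0; simp [hd0]; positivity
        · have hdx : 0 < d x := hd x (by omega) (by omega)
          have hprev := ih (x-1) (by omega) (by omega)
          have : (⟨x-1+1, by omega⟩ : Fin (N+1)) = ⟨x, by omega⟩ := by
            ext; simp; omega
          rw [this] at hprev
          have : 0 ≤ d x * (f ⟨x-1, by omega⟩ - f ⟨x, by omega⟩) := by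
            apply mul_nonneg hdx.le; linarith
          nlinarith
      have hkey : b (x+1) * (f ⟨x, by omega⟩ - f ⟨x+1, by omega⟩)
          = lam * f ⟨x, by omega⟩ + d x * (f ⟨x-1, by omega⟩ - f ⟨x, by omega⟩) := by
        nlinarith [heq]
      nlinarith [hkey, hrhs, hbpos]
  rw [Fin.strictAnti_iff_succ_lt]
  intro i
  have := key i i.isLt
  have h1 : (⟨(i:ℕ)+1, by omega⟩ : Fin (N+1)) = i.succ := rfl
  have h2 : (⟨(i:ℕ), by omega⟩ : Fin (N+1)) = i.castSucc := rfl
  rwa [h1, h2] at this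
end

section
/- For a birth-and-death chain on {0,...,N} with positive birth rates, positive death rates d_1,...,d_M and zero death rates above level M (where 1 ≤ M ≤ N-1), there exists a quasi-stationary vector ρ : {0,...,N} → ℝ with ρ > 0 on {0,...,M}, ρ = 0 on {M+1,...,N}, Σ_x ρ(x) = 1, and G†ρ = -λρ + λδ_{M+1}, where λ = b_{M+1} ρ(M) > 0. -/
open Matrix Polynomial Finset

/-!
Integrating `G†ρ = -λρ` upward from `0` gives the flux form
`d_{y+1} ρ(y+1) - b_{y+1} ρ(y) = -λ ∑_{z ≤ y} ρ(z)`, so for each `λ` the equations on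
`{0,...,M}` determine `ρ = p_λ` from `p_λ(0) = 1` by shooting, with
`p_λ(y+1) = g_λ(y) / d_{y+1}` for the defect `g_λ(y) = b_{y+1} p_λ(y) - λ ∑_{z ≤ y} p_λ(z)`;
the one remaining equation is `g_λ(M) = 0`. All defects are positive at `λ = 0` and
`g_{b_1}(0) = 0`, so by the intermediate value theorem the smallest defect vanishes at some
`λ > 0`. There all defects are `≥ 0`, hence `p_λ ≥ 0`, and `g_λ(y) = 0` with `y < M` would force
`p_λ(y+1) = 0` and `g_λ(y+1) = -λ ∑_{z ≤ y+1} p_λ(z) < 0`; so only `g_λ(M)` vanishes and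
`p_λ > 0` on `{0,...,M}`. Normalising `p_λ` and extending it by `0` gives `ρ`, and the flux form
telescopes to `G†ρ = -λρ + λδ_{M+1}`.
-/

def bdFlux (b d r : ℕ → ℝ) (y : ℕ) : ℝ := d (y + 1) * r (y + 1) - b (y + 1) * r y

lemma vecMul_bdGen_apply {N : ℕ} {b d : ℕ → ℝ} (hd0 : d 0 = 0) {r : ℕ → ℝ}
    (hN : bdFlux b d r N = 0) (y : Fin (N + 1)) :
    vecMul (fun x : Fin (N + 1) => r x) (bdGen N b d) y
      = bdFlux b d r y - if (y : ℕ) = 0 then 0 else bdFlux b d r (y - 1) := by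
  have hentry : ∀ x : Fin (N + 1), r x * bdGen N b d x y =
      (if (x : ℕ) + 1 = y then b y * r x else 0) + (if (x : ℕ) = y + 1 then d x * r x else 0)
        - if (x : ℕ) = y then ((if (y : ℕ) < N then b (y + 1) else 0) + d y) * r x else 0 := by
    intro x
    simp only [bdGen, of_apply, Fin.ext_iff]
    split_ifs <;> grind
  simp only [vecMul, dotProduct, hentry, sum_add_distrib, sum_sub_distrib,
    Fin.sum_univ_eq_sum_range (fun x => if x + 1 = (y : ℕ) then b y * r x else 0),
    Fin.sum_univ_eq_sum_range (fun x => if x = (y : ℕ) + 1 then d x * r x else 0),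
    Fin.sum_univ_eq_sum_range (fun x => if x = (y : ℕ) then
      ((if (y : ℕ) < N then b (y + 1) else 0) + d y) * r x else 0), sum_ite_eq', mem_range]
  obtain ⟨_ | k, hk⟩ := y
  · simp only [Nat.add_one_ne_zero, if_false, sum_const_zero, zero_add, if_true]
    split_ifs <;> simp_all [bdFlux]
  · simp only [Nat.add_right_cancel_iff, sum_ite_eq', mem_range, Nat.add_one_ne_zero]
    rcases (Nat.lt_or_ge (k + 1) N) with hkN | hkN
    · simp [hkN, hkN.le, (show k ≤ N by omega), bdFlux]
      ring
    · obtain rfl : N = k + 1 := by omega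
      simp [bdFlux] at hN ⊢
      linarith

/-- The correction `1` past `M` accounts for the unit mass that has left through `M + 1`. -/
lemma vecMul_bdGen_eq_of_bdFlux {N M : ℕ} {b d : ℕ → ℝ} (hd0 : d 0 = 0) (hMN : M < N)
    {ρ : ℕ → ℝ} {lam : ℝ} (hmass : ∑ z ∈ range (N + 1), ρ z = 1)
    (hflux : ∀ y, bdFlux b d ρ y = -lam * (∑ z ∈ range (y + 1), ρ z - if M < y then 1 else 0)) :
    vecMul (fun x : Fin (N + 1) => ρ x) (bdGen N b d)
      = -lam • (fun x : Fin (N + 1) => ρ x)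
        + lam • fun x : Fin (N + 1) => if (x : ℕ) = M + 1 then (1 : ℝ) else 0 := by
  funext y
  rw [vecMul_bdGen_apply hd0 (by rw [hflux, hmass, if_pos hMN, sub_self, mul_zero])]
  obtain ⟨_ | k, hk⟩ := y
  · simp [hflux]
  · simp only [hflux, sum_range_succ _ (k + 1), Nat.add_one_ne_zero, if_false,
      Nat.add_sub_cancel, Pi.add_apply, Pi.smul_apply, smul_eq_mul]
    split_ifs <;> first | omega | ring

/-- `p_λ`, solving the flux form forward from `p_λ(0) = 1`. -/
noncomputable def shooting (b d : ℕ → ℝ) (lam : ℝ) : ℕ → ℝ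
  | 0 => 1
  | y + 1 =>
    (b (y + 1) * shooting b d lam y - lam * ∑ z : Fin (y + 1), shooting b d lam z) / d (y + 1)

noncomputable def shootingDefect (b d : ℕ → ℝ) (lam : ℝ) (y : ℕ) : ℝ :=
  b (y + 1) * shooting b d lam y - lam * ∑ z ∈ range (y + 1), shooting b d lam z

section Shooting

variable {b d : ℕ → ℝ}

@[simp] lemma shooting_zero (lam : ℝ) : shooting b d lam 0 = 1 := by
  rw [shooting]

lemma shooting_succ (lam : ℝ) (y : ℕ) :
    shooting b d lam (y + 1) = shootingDefect b d lam y / d (y + 1) := by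
  rw [shooting, Fin.sum_univ_eq_sum_range (shooting b d lam), shootingDefect]

lemma mul_shooting_succ {lam : ℝ} {y : ℕ} (hy : d (y + 1) ≠ 0) :
    d (y + 1) * shooting b d lam (y + 1) = shootingDefect b d lam y := by
  rw [shooting_succ, mul_div_cancel₀ _ hy]

lemma continuous_shooting (y : ℕ) : Continuous fun lam => shooting b d lam y := by
  induction y using Nat.strong_induction_on with
  | _ y ih =>
    cases y with
    | zero => simp only [shooting_zero]; exact continuous_const
    | succ y =>
      simp only [shooting_succ, shootingDefect]
      exact ((continuous_const.mul (ih y (by omega))).sub (continuous_id.mul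
        (continuous_finsetSum _ fun z hz => ih z (by simpa using hz)))).div_const _

lemma continuous_shootingDefect (y : ℕ) : Continuous fun lam => shootingDefect b d lam y :=
  (continuous_const.mul (continuous_shooting y)).sub
    (continuous_id.mul (continuous_finsetSum _ fun z _ => continuous_shooting z))

lemma shootingDefect_pos_at_zero {M : ℕ} (hb : ∀ x, 1 ≤ x → x ≤ M + 1 → 0 < b x)
    (hd : ∀ x, 1 ≤ x → x ≤ M → 0 < d x) : ∀ y ≤ M, 0 < shootingDefect b d 0 y := by
  suffices ∀ y ≤ M, 0 < shooting b d 0 y by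
    intro y hy
    simpa [shootingDefect] using mul_pos (hb (y + 1) (by omega) (by omega)) (this y hy)
  intro y hy
  induction y with
  | zero => simp
  | succ y ih =>
    rw [shooting_succ]
    refine div_pos ?_ (hd (y + 1) (by omega) hy)
    simpa [shootingDefect] using mul_pos (hb (y + 1) (by omega) (by omega)) (ih (by omega))

lemma shooting_nonneg_of_shootingDefect_nonneg {M : ℕ} {lam : ℝ}
    (hd : ∀ x, 1 ≤ x → x ≤ M → 0 < d x)
    (hg : ∀ y < M, 0 ≤ shootingDefect b d lam y) : ∀ y ≤ M, 0 ≤ shooting b d lam y := by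
  intro y hy
  cases y with
  | zero => simp
  | succ y => rw [shooting_succ]; exact div_nonneg (hg y (by omega)) (hd (y + 1) (by omega) hy).le

lemma shootingDefect_succ_neg {lam : ℝ} {y : ℕ} (hlam : 0 < lam)
    (hp : ∀ z ≤ y + 1, 0 ≤ shooting b d lam z)
    (hg : shootingDefect b d lam y = 0) : shootingDefect b d lam (y + 1) < 0 := by
  have hmass : 1 ≤ ∑ z ∈ range (y + 2), shooting b d lam z := by
    rw [sum_range_succ']
    simpa using sum_nonneg fun z hz => hp (z + 1) (by simp at hz; omega)
  rw [shootingDefect, shooting_succ, hg, zero_div, mul_zero, zero_sub, neg_neg_iff_pos]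
  nlinarith

lemma exists_shootingDefect_eq_zero {M : ℕ} (hb : ∀ x, 1 ≤ x → x ≤ M + 1 → 0 < b x)
    (hd : ∀ x, 1 ≤ x → x ≤ M → 0 < d x) :
    ∃ lam, 0 < lam ∧ (∀ y ≤ M, 0 < shooting b d lam y) ∧ shootingDefect b d lam M = 0 := by
  set h : ℝ → ℝ := fun lam => (range (M + 1)).inf' (nonempty_range_iff.2 M.succ_ne_zero)
    (shootingDefect b d lam)
  have hcont : Continuous h :=
    Continuous.finset_inf'_apply _ fun y _ => continuous_shootingDefect y
  have h0 : 0 < h 0 :=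
    (lt_inf'_iff _).2 fun y hy => shootingDefect_pos_at_zero hb hd y (by simpa using hy)
  have hb1 : h (b 1) ≤ 0 :=
    (inf'_le _ (by simp : 0 ∈ range (M + 1))).trans (by simp [shootingDefect])
  obtain ⟨lam, ⟨hlam0, -⟩, hlam⟩ := intermediate_value_Icc' (hb 1 le_rfl (by omega)).le
    hcont.continuousOn ⟨hb1, h0.le⟩
  have hlam_pos : 0 < lam := hlam0.lt_of_ne (by rintro rfl; exact h0.ne' hlam)
  have hge : ∀ y ≤ M, 0 ≤ shootingDefect b d lam y := fun y hy =>
    hlam ▸ inf'_le _ (by simpa [Nat.lt_succ_iff] using hy)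
  have hp := shooting_nonneg_of_shootingDefect_nonneg hd fun y hy => hge y hy.le
  have hpos : ∀ y < M, 0 < shootingDefect b d lam y := fun y hy =>
    (hge y hy.le).lt_of_ne' fun hzero => (shootingDefect_succ_neg hlam_pos
      (fun z hz => hp z (by omega)) hzero).not_ge (hge (y + 1) hy)
  obtain ⟨y, hy, hymin⟩ := exists_mem_eq_inf' (nonempty_range_iff.2 M.succ_ne_zero)
    (shootingDefect b d lam)
  obtain rfl : y = M := by
    by_contra hne
    exact (hpos y (by simp at hy; omega)).ne' (hymin.symm.trans hlam)
  refine ⟨lam, hlam_pos, fun z hz => ?_, hymin.symm.trans hlam⟩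
  cases z with
  | zero => simp
  | succ z => rw [shooting_succ]; exact div_pos (hpos z (by omega)) (hd (z + 1) (by omega) hz)

lemma bdFlux_shooting {lam : ℝ} {y : ℕ} (hy : d (y + 1) ≠ 0) :
    bdFlux b d (shooting b d lam) y = -lam * ∑ z ∈ range (y + 1), shooting b d lam z := by
  rw [bdFlux, mul_shooting_succ hy, shootingDefect]
  ring

end Shooting

noncomputable def qsdVector (b d : ℕ → ℝ) (lam : ℝ) (M y : ℕ) : ℝ :=
  if y ≤ M then shooting b d lam y / ∑ z ∈ range (M + 1), shooting b d lam z else 0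

namespace qsdVector

variable {b d : ℕ → ℝ} {lam : ℝ} {M : ℕ}

lemma sum_range_of_le {y : ℕ} (hy : y ≤ M) :
    ∑ z ∈ range (y + 1), qsdVector b d lam M z
      = (∑ z ∈ range (y + 1), shooting b d lam z) / ∑ z ∈ range (M + 1), shooting b d lam z := by
  rw [sum_div]
  exact sum_congr rfl fun z hz => if_pos (by simp at hz; omega)

lemma sum_range_of_ge (hS : ∑ z ∈ range (M + 1), shooting b d lam z ≠ 0) {y : ℕ} (hy : M ≤ y) :
    ∑ z ∈ range (y + 1), qsdVector b d lam M z = 1 := by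
  rw [← sum_range_add_sum_Ico _ (Nat.succ_le_succ hy), sum_range_of_le le_rfl, div_self hS,
    sum_eq_zero fun z hz => by rw [qsdVector, if_neg (by simp at hz; omega)], add_zero]

end qsdVector

lemma bdFlux_qsdVector {b d : ℕ → ℝ} {lam : ℝ} {M : ℕ} (hd : ∀ x, 1 ≤ x → x ≤ M → 0 < d x)
    (hS : ∑ z ∈ range (M + 1), shooting b d lam z ≠ 0) (hroot : shootingDefect b d lam M = 0)
    (y : ℕ) : bdFlux b d (qsdVector b d lam M) y
      = -lam * (∑ z ∈ range (y + 1), qsdVector b d lam M z - if M < y then 1 else 0) := by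
  rcases lt_trichotomy y M with hy | rfl | hy
  · have hflux := bdFlux_shooting (b := b) (lam := lam) (hd (y + 1) (by omega) hy).ne'
    rw [bdFlux] at hflux ⊢
    rw [qsdVector, qsdVector, if_pos (Nat.succ_le_of_lt hy), if_pos hy.le,
      qsdVector.sum_range_of_le hy.le, if_neg hy.not_gt]
    field_simp
    linear_combination hflux
  · rw [bdFlux, qsdVector, qsdVector, if_neg (by omega), if_pos le_rfl,
      qsdVector.sum_range_of_ge hS le_rfl,
      if_neg (lt_irrefl _)]
    rw [shootingDefect] at hroot
    rw [mul_zero, zero_sub, sub_zero, mul_one, neg_inj, mul_div_assoc', div_eq_iff hS]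
    linear_combination hroot
  · rw [bdFlux, qsdVector, qsdVector, if_neg (by omega), if_neg (by omega),
      qsdVector.sum_range_of_ge hS hy.le, if_pos hy]
    ring

/-- Existence of a quasi-stationary vector `ρ`: `ρ > 0` on `{0,...,M}`, `ρ = 0`
on `{M+1,...,N}`, `Σρ = 1` and `G†ρ = -λρ + λδ_{M+1}` with
`λ = b_{M+1} ρ(M) > 0`. -/
theorem stmt5 (N M : ℕ) (hMN : M + 1 ≤ N) (b d : ℕ → ℝ)
    (hb : ∀ x, 1 ≤ x → x ≤ N → 0 < b x)
    (hd : ∀ x, 1 ≤ x → x ≤ M → 0 < d x)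
    (hd0 : d 0 = 0) :
    ∃ (ρ : Fin (N+1) → ℝ) (lam : ℝ),
      lam = b (M+1) * ρ ⟨M, by omega⟩ ∧ 0 < lam ∧
      (∀ x : Fin (N+1), (x : ℕ) ≤ M → 0 < ρ x) ∧
      (∀ x : Fin (N+1), M + 1 ≤ (x : ℕ) → ρ x = 0) ∧
      (∑ x, ρ x) = 1 ∧
      Matrix.vecMul ρ (bdGen N b d)
        = -lam • ρ + lam • (fun x : Fin (N+1) => if (x : ℕ) = M + 1 then (1:ℝ) else 0) := by
  obtain ⟨lam, hlam, hpos, hroot⟩ :=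
    exists_shootingDefect_eq_zero (fun x h1 h2 => hb x h1 (by omega)) hd
  have hS : 0 < ∑ z ∈ range (M + 1), shooting b d lam z :=
    sum_pos (fun z hz => hpos z (by simp at hz; omega)) (nonempty_range_iff.2 M.succ_ne_zero)
  have hmass : ∑ x : Fin (N + 1), qsdVector b d lam M x = 1 := by
    rw [Fin.sum_univ_eq_sum_range (qsdVector b d lam M)]
    exact qsdVector.sum_range_of_ge hS.ne' (by omega)
  refine ⟨fun x => qsdVector b d lam M x, lam, ?_, hlam, fun x hx => ?_, fun x hx => ?_, hmass,
    vecMul_bdGen_eq_of_bdFlux hd0 hMN (by simpa [Fin.sum_univ_eq_sum_range] using hmass)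
      (bdFlux_qsdVector hd hS.ne' hroot)⟩
  · rw [shootingDefect] at hroot
    simp only [qsdVector, if_pos le_rfl]
    field_simp
    linear_combination -hroot
  · simp only [qsdVector, if_pos hx]
    exact div_pos (hpos x hx) hS
  · simp only [qsdVector, if_neg (show ¬ (x : ℕ) ≤ M by omega)]
end

section
/- Let 1 ≤ M ≤ N-1 and let G be the generator of a birth-and-death chain on {0,...,N} with birth rates b_1,...,b_N > 0, death rates d_1,...,d_M > 0 and d_{M+1} = ... = d_N = 0. Then there exists a stochastic matrix K on {0,...,N} with K(x,{0,...,x}) = 1 for all x and K(x,x) = 1 for M+1 ≤ x ≤ N, and a generator G' of a birth-and-death chain on {0,...,N} with birth rates b'_1,...,b'_N > 0 and death rates d'_1,...,d'_{M-1} > 0, d'_M = ... = d'_N = 0, such that KG = G'K. -/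
open Matrix Polynomial Finset

/-!
Let `v` be the positive left eigenvector, with eigenvalue `-l`, of `G` killed on leaving
`{0, …, M}`. With `V x = v 0 + ⋯ + v x` this says that the net flow
`v x * b (x + 1) - v (x + 1) * d (x + 1)` across each edge `(x, x + 1)` is `l * V x`, i.e. that
`flux x = v x * b (x + 1) - l * V x` equals `v (x + 1) * d (x + 1)` for `x < M` and vanishes at
`x = M`. Solving this recursion for `v` as a function of `l`, the fluxes `flux 0, …, flux M` are
positive at `l = 0`, and `flux 0` vanishes at `l = b 1`; the intermediate value theorem for their
minimum gives an `l > 0` where all are nonnegative and one vanishes, and the recursion forces it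
to be the last one.

Take `K x = (v restricted to {0, …, x}) / V x` for `x ≤ M` and `K x = δ x` above `M`. Summation by
parts gives `∑_{z ≤ x} v z * (G f) z = l * (V x * f x - ∑_{z ≤ x} v z * f z)
+ v x * b (x + 1) * (f (x + 1) - f x)`, from which `K G f = G' K f` is read off with explicit rates
`b'`, `d'`; at `M` the eigenvalue becomes the birth rate `b' (M + 1) = l`, and `d' M = 0`.
-/

noncomputable section

lemma exists_forall_nonneg_exists_eq_zero {ι : Type*} (s : Finset ι) (f : ι → ℝ → ℝ)
    (hf : ∀ i ∈ s, Continuous (f i)) {a c : ℝ} (hac : a ≤ c) (ha : ∀ i ∈ s, 0 < f i a)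
    (hc : ∃ i ∈ s, f i c ≤ 0) :
    ∃ t ∈ Set.Ioc a c, (∀ i ∈ s, 0 ≤ f i t) ∧ ∃ i ∈ s, f i t = 0 := by
  obtain ⟨j, hjs, hjc⟩ := hc
  have hs : s.Nonempty := ⟨j, hjs⟩
  set g : ℝ → ℝ := fun t => s.inf' hs (f · t)
  have hga : 0 < g a := (Finset.lt_inf'_iff hs).2 ha
  have hgc : g c ≤ 0 := (Finset.inf'_le _ hjs).trans hjc
  obtain ⟨t, ⟨hat, htc⟩, hgt⟩ := intermediate_value_Icc' hac
    (Continuous.finset_inf'_apply hs hf).continuousOn ⟨hgc, hga.le⟩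
  obtain ⟨i, his, hi⟩ := Finset.exists_mem_eq_inf' hs (f · t)
  refine ⟨t, ⟨lt_of_le_of_ne hat ?_, htc⟩, fun k hk => ?_, i, his, hi ▸ hgt⟩
  · rintro rfl; exact hga.ne' hgt
  · exact hgt ▸ Finset.inf'_le _ hk

def cumSum (v : ℕ → ℝ) (x : ℕ) : ℝ := ∑ i ∈ range (x + 1), v i

def flux (b : ℕ → ℝ) (l : ℝ) (v : ℕ → ℝ) (x : ℕ) : ℝ := v x * b (x + 1) - l * cumSum v x

lemma cumSum_zero (v : ℕ → ℝ) : cumSum v 0 = v 0 := by simp [cumSum]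

lemma cumSum_succ (v : ℕ → ℝ) (x : ℕ) : cumSum v (x + 1) = cumSum v x + v (x + 1) :=
  sum_range_succ v (x + 1)

/-- `(v x, cumSum v x)` for the solution of `v 0 = 1`, `v (x + 1) * d (x + 1) = flux b l v x`. -/
def eigenPair (b d : ℕ → ℝ) (l : ℝ) : ℕ → ℝ × ℝ
  | 0 => (1, 1)
  | x + 1 =>
    let p := eigenPair b d l x
    let w := (p.1 * b (x + 1) - l * p.2) / d (x + 1)
    (w, p.2 + w)

def eigenVec (b d : ℕ → ℝ) (l : ℝ) (x : ℕ) : ℝ := (eigenPair b d l x).1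

section EigenVec

variable (b d : ℕ → ℝ) (l : ℝ)

lemma eigenPair_snd (x : ℕ) : (eigenPair b d l x).2 = cumSum (eigenVec b d l) x := by
  induction x with
  | zero => simp [eigenPair, cumSum_zero, eigenVec]
  | succ x ih => rw [cumSum_succ, ← ih]; rfl

@[simp] lemma eigenVec_zero : eigenVec b d l 0 = 1 := rfl

lemma eigenVec_succ (x : ℕ) :
    eigenVec b d l (x + 1) = flux b l (eigenVec b d l) x / d (x + 1) := by
  simp only [eigenVec, eigenPair, flux, eigenPair_snd]

lemma continuous_eigenPair (x : ℕ) : Continuous fun l => eigenPair b d l x := by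
  induction x with
  | zero => exact continuous_const
  | succ x ih =>
    have hw : Continuous fun l =>
        ((eigenPair b d l x).1 * b (x + 1) - l * (eigenPair b d l x).2) / d (x + 1) :=
      ((ih.fst.mul continuous_const).sub (continuous_id.mul ih.snd)).div_const _
    exact hw.prodMk (ih.snd.add hw)

lemma continuous_flux_eigenVec (x : ℕ) : Continuous fun l => flux b l (eigenVec b d l) x := by
  simp only [flux, ← eigenPair_snd, eigenVec]
  exact ((continuous_eigenPair b d x).fst.mul continuous_const).sub
    (continuous_id.mul (continuous_eigenPair b d x).snd)

end EigenVec

lemma eigenVec_succ_mul {b d : ℕ → ℝ} {l : ℝ} {x : ℕ} (hd : d (x + 1) ≠ 0) :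
    eigenVec b d l (x + 1) * d (x + 1) = flux b l (eigenVec b d l) x := by
  rw [eigenVec_succ, div_mul_cancel₀ _ hd]

section EigenVecPos

variable {M : ℕ} {b d : ℕ → ℝ} (hd : ∀ x, 1 ≤ x → x ≤ M → 0 < d x)
include hd

lemma eigenVec_pos_of_eigenvalue_zero (hb : ∀ x, 1 ≤ x → x ≤ M → 0 < b x) {x : ℕ}
    (hx : x ≤ M) : 0 < eigenVec b d 0 x := by
  induction x with
  | zero => simp
  | succ x ih =>
    rw [eigenVec_succ, flux, zero_mul, sub_zero]
    exact div_pos (mul_pos (ih (by omega)) (hb _ (by omega) hx)) (hd _ (by omega) hx)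

lemma eigenVec_pos_of_flux_nonneg {l : ℝ} (hl : 0 < l)
    (hflux : ∀ x ≤ M, 0 ≤ flux b l (eigenVec b d l) x) {x : ℕ} (hx : x ≤ M) :
    0 < eigenVec b d l x := by
  set v := eigenVec b d l
  have hv_nonneg : ∀ x ≤ M, 0 ≤ v x := by
    rintro (_ | x) hx
    · simp [v]
    · show 0 ≤ eigenVec b d l (x + 1)
      rw [eigenVec_succ]
      exact div_nonneg (hflux x (by omega)) (hd _ (by omega) hx).le
  have hV : 0 < cumSum v x :=
    calc (0 : ℝ) < v 0 := by simp [v]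
      _ ≤ cumSum v x := single_le_sum (fun i hi => hv_nonneg i (by
          simp only [mem_range] at hi; omega)) (by simp)
  -- a vanishing `v x` would make `flux x` negative
  obtain _ | x := x
  · simp [v]
  refine (hv_nonneg _ hx).lt_of_ne fun h0 => (mul_pos hl hV).not_ge ?_
  have := hflux (x + 1) hx
  rwa [flux, ← h0, zero_mul, zero_sub, neg_nonneg] at this

lemma exists_eigenVec_pos (hb : ∀ x, 1 ≤ x → x ≤ M + 1 → 0 < b x) :
    ∃ l, 0 < l ∧ (∀ x ≤ M, 0 < eigenVec b d l x) ∧ flux b l (eigenVec b d l) M = 0 := by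
  -- `flux 0` vanishes at `l = b 1`
  obtain ⟨l, ⟨hl, -⟩, hflux, j, hj, hfj⟩ := exists_forall_nonneg_exists_eq_zero (range (M + 1))
    (fun x l => flux b l (eigenVec b d l) x) (fun x _ => continuous_flux_eigenVec b d x)
    (hb 1 le_rfl (by omega)).le
    (fun x hx => by
      have hxM := Nat.lt_succ_iff.1 (mem_range.1 hx)
      rw [flux, zero_mul, sub_zero]
      exact mul_pos (eigenVec_pos_of_eigenvalue_zero hd (fun y h1 h2 => hb y h1 (by omega)) hxM)
        (hb _ (by omega) (by omega)))
    ⟨0, by simp, by simp [flux, cumSum_zero]⟩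
  simp only [mem_range, Nat.lt_succ_iff] at hflux hj
  have hv : ∀ x ≤ M, 0 < eigenVec b d l x := fun x => eigenVec_pos_of_flux_nonneg hd hl hflux
  refine ⟨l, hl, hv, ?_⟩
  obtain rfl | hjM := hj.eq_or_lt
  · exact hfj
  · rw [← eigenVec_succ_mul (hd _ (by omega) hjM).ne'] at hfj
    exact absurd hfj (mul_pos (hv _ hjM) (hd _ (by omega) hjM)).ne'

end EigenVecPos

def bdGenOp (b d f : ℕ → ℝ) (x : ℕ) : ℝ :=
  b (x + 1) * (f (x + 1) - f x) + d x * (f (x - 1) - f x)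

def dualKernelOp (M : ℕ) (v f : ℕ → ℝ) (x : ℕ) : ℝ :=
  if x ≤ M then (∑ i ∈ range (x + 1), v i * f i) / cumSum v x else f x

def dualBirth (M : ℕ) (l : ℝ) (b v : ℕ → ℝ) (x : ℕ) : ℝ :=
  if x ≤ M then v (x - 1) * b x * cumSum v x / (v x * cumSum v (x - 1))
  else if x = M + 1 then l else b x

def dualDeath (M : ℕ) (d v : ℕ → ℝ) (x : ℕ) : ℝ :=
  if 1 ≤ x ∧ x + 1 ≤ M then cumSum v (x - 1) * (v (x + 1) * d (x + 1)) / (v x * cumSum v x)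
  else 0

section Intertwining

variable {M : ℕ} {b d v : ℕ → ℝ} {l : ℝ}

lemma sum_mul_bdGenOp (f : ℕ → ℝ) (x : ℕ)
    (hrec : ∀ z < x, v (z + 1) * d (z + 1) = flux b l v z) :
    ∑ z ∈ range (x + 1), v z * bdGenOp b d f z
      = l * (cumSum v x * f x - ∑ z ∈ range (x + 1), v z * f z)
        + v x * b (x + 1) * (f (x + 1) - f x) := by
  induction x with
  | zero =>
    simp only [zero_add, range_one, bdGenOp, sum_singleton, zero_tsub, sub_self, mul_zero,
      add_zero, cumSum_zero]
    ring
  | succ x ih =>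
    rw [sum_range_succ, ih fun z hz => hrec z (by omega),
      sum_range_succ (fun z => v z * f z) (x + 1), cumSum_succ]
    simp only [bdGenOp, flux, Nat.add_sub_cancel] at hrec ⊢
    linear_combination (f x - f (x + 1)) * hrec x (by omega)

variable (hv : ∀ x ≤ M, 0 < v x)
include hv

lemma cumSum_pos {x : ℕ} (hx : x ≤ M) : 0 < cumSum v x :=
  sum_pos (fun i hi => hv i (by simp only [mem_range] at hi; omega)) nonempty_range_add_one

lemma dualKernelOp_bdGenOp_of_le (hrec : ∀ z < M, v (z + 1) * d (z + 1) = flux b l v z)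
    (f : ℕ → ℝ) {x : ℕ} (hx : x ≤ M) :
    dualKernelOp M v (bdGenOp b d f) x
      = l * (f x - dualKernelOp M v f x) + v x * b (x + 1) / cumSum v x * (f (x + 1) - f x) := by
  have := (cumSum_pos hv hx).ne'
  simp only [dualKernelOp, if_pos hx]
  rw [sum_mul_bdGenOp f x fun z hz => hrec z (by omega)]
  field_simp

lemma dualBirth_mul_sub (hflux : flux b l v M = 0) (f : ℕ → ℝ) {x : ℕ} (hx : x ≤ M) :
    dualBirth M l b v (x + 1) * (dualKernelOp M v f (x + 1) - dualKernelOp M v f x)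
      = v x * b (x + 1) / cumSum v x * (f (x + 1) - dualKernelOp M v f x) := by
  have hV := (cumSum_pos hv hx).ne'
  obtain hxM | rfl := hx.lt_or_eq
  · have hV' : cumSum v x + v (x + 1) ≠ 0 := by
      rw [← cumSum_succ]; exact (cumSum_pos hv hxM).ne'
    have hv' := (hv _ hxM).ne'
    simp only [dualBirth, dualKernelOp, if_pos (show x + 1 ≤ M from hxM), if_pos hx,
      Nat.add_sub_cancel]
    rw [sum_range_succ _ (x + 1), cumSum_succ]
    field_simp
    ring
  · rw [flux] at hflux
    have hl : l = v x * b (x + 1) / cumSum v x := by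
      rw [eq_div_iff hV]; linear_combination -hflux
    simp [dualBirth, dualKernelOp, hl]

lemma dualDeath_mul_sub (hrec : ∀ z < M, v (z + 1) * d (z + 1) = flux b l v z)
    (hflux : flux b l v M = 0) (f : ℕ → ℝ) {x : ℕ} (hx : x ≤ M) :
    dualDeath M d v x * (dualKernelOp M v f (x - 1) - dualKernelOp M v f x)
      = (v x * b (x + 1) / cumSum v x - l) * (dualKernelOp M v f x - f x) := by
  have hV := (cumSum_pos hv hx).ne'
  obtain hxM | rfl := hx.lt_or_eq
  · obtain _ | y := x
    · have := (hv 0 (by omega)).ne'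
      simp [dualDeath, dualKernelOp, cumSum_zero, this]
    · have hV' := (cumSum_pos hv (x := y) (by omega)).ne'
      have := (hv (y + 1) hx).ne'
      have hrec' := hrec (y + 1) hxM
      simp only [dualDeath, dualKernelOp, flux, if_pos hx, if_pos (show y ≤ M by omega),
        if_pos (show 1 ≤ y + 1 ∧ y + 1 + 1 ≤ M from ⟨by omega, hxM⟩), Nat.add_sub_cancel] at hrec' ⊢
      rw [hrec', sum_range_succ _ (y + 1), cumSum_succ] at *
      field_simp
      ring
  · have hcoef : v x * b (x + 1) / cumSum v x - l = 0 := by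
      rw [flux] at hflux
      rw [sub_eq_zero, div_eq_iff hV]; linear_combination hflux
    simp [dualDeath, hcoef]

theorem dualKernelOp_bdGenOp (hrec : ∀ z < M, v (z + 1) * d (z + 1) = flux b l v z)
    (hflux : flux b l v M = 0) (hdz : ∀ x, M < x → d x = 0) (f : ℕ → ℝ) (x : ℕ) :
    dualKernelOp M v (bdGenOp b d f) x
      = bdGenOp (dualBirth M l b v) (dualDeath M d v) (dualKernelOp M v f) x := by
  by_cases hx : x ≤ M
  · rw [dualKernelOp_bdGenOp_of_le hv hrec f hx, bdGenOp, dualBirth_mul_sub hv hflux f hx,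
      dualDeath_mul_sub hv hrec hflux f hx]
    ring
  · simp [bdGenOp, dualKernelOp, dualBirth, dualDeath, hdz x (by omega), hx,
      show ¬ x + 1 ≤ M by omega, show x ≠ M by omega]

end Intertwining

/-- Constant extension past `N`, which makes the birth term at `N` of `bdGenOp` vanish, as in
`bdGen`. -/
def extendConst {N : ℕ} (f : Fin (N + 1) → ℝ) (i : ℕ) : ℝ := f ⟨min i N, by omega⟩

lemma extendConst_val {N : ℕ} (f : Fin (N + 1) → ℝ) (x : Fin (N + 1)) :
    extendConst f x = f x :=
  congrArg f (Fin.ext (min_eq_left (Nat.lt_succ_iff.1 x.2)))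

lemma extendConst_of_le {N : ℕ} (f : Fin (N + 1) → ℝ) {i : ℕ} (hi : N ≤ i) :
    extendConst f i = extendConst f N := by
  simp only [extendConst, min_eq_right hi, min_self]

lemma sum_fin_mul_extendConst {N : ℕ} (g : ℕ → ℝ) (f : Fin (N + 1) → ℝ) :
    ∑ y : Fin (N + 1), g y * f y = ∑ i ∈ range (N + 1), g i * extendConst f i := by
  rw [← Fin.sum_univ_eq_sum_range]
  simp only [extendConst_val]

lemma bdGen_mulVec {N : ℕ} {b d : ℕ → ℝ} (hd0 : d 0 = 0) (f : Fin (N + 1) → ℝ)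
    (x : Fin (N + 1)) : (bdGen N b d *ᵥ f) x = bdGenOp b d (extendConst f) x := by
  have hentry : ∀ y : Fin (N + 1), bdGen N b d x y
      = (if (y : ℕ) = x + 1 then b (x + 1) else 0) + (if (y : ℕ) = x - 1 then d x else 0)
        - (if (y : ℕ) = x then (if (x : ℕ) < N then b (x + 1) else 0) + d x else 0) := by
    intro y
    -- at `x = 0` the truncated `x - 1` hits the diagonal, harmlessly since `d 0 = 0`
    simp only [bdGen, of_apply, Fin.ext_iff]
    split_ifs <;> first
      | ring1
      | (exfalso; omega)
      | (rw [show (x : ℕ) = 0 by omega, hd0]; ring1)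
  have hx := x.isLt
  simp only [mulVec, dotProduct, hentry]
  rw [sum_fin_mul_extendConst (fun i => (if i = x + 1 then b (x + 1) else 0)
    + (if i = x - 1 then d x else 0)
    - (if i = x then (if (x : ℕ) < N then b (x + 1) else 0) + d x else 0))]
  simp only [add_mul, sub_mul, ite_mul, zero_mul, sum_add_distrib, sum_sub_distrib, sum_ite_eq',
    mem_range, bdGenOp]
  rcases Nat.lt_succ_iff_lt_or_eq.1 hx with hxN | hxN
  · simp only [if_pos hxN, if_pos (show (x : ℕ) + 1 < N + 1 by omega),
      if_pos (show (x : ℕ) - 1 < N + 1 by omega), if_pos hx]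
    ring
  · simp only [hxN, lt_irrefl, if_false, if_pos (show N - 1 < N + 1 by omega),
      if_pos (show N < N + 1 by omega), extendConst_of_le f (Nat.le_succ N)]
    ring

def dualKernel (N M : ℕ) (v : ℕ → ℝ) : Matrix (Fin (N + 1)) (Fin (N + 1)) ℝ :=
  of fun x y => if (x : ℕ) ≤ M then (if (y : ℕ) ≤ x then v y / cumSum v x else 0)
    else (if y = x then 1 else 0)

lemma dualKernel_mulVec {N M : ℕ} (v : ℕ → ℝ) (f : Fin (N + 1) → ℝ) (x : Fin (N + 1)) :
    (dualKernel N M v *ᵥ f) x = dualKernelOp M v (extendConst f) x := by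
  simp only [mulVec, dotProduct, dualKernel, of_apply, dualKernelOp]
  split_ifs with hx
  · rw [sum_fin_mul_extendConst (fun i => if i ≤ x then v i / cumSum v x else 0), sum_div]
    simp only [ite_mul, zero_mul, ← sum_filter]
    exact sum_congr (by ext; simp only [mem_filter, mem_range]; omega)
      fun i _ => div_mul_eq_mul_div _ _ _
  · simp [extendConst_val]

lemma dualKernelOp_congr {M x : ℕ} (v : ℕ → ℝ) {f g : ℕ → ℝ} (h : ∀ i ≤ x, f i = g i) :
    dualKernelOp M v f x = dualKernelOp M v g x := by
  simp only [dualKernelOp]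
  rw [sum_congr rfl fun i hi => by rw [h i (by simp only [mem_range] at hi; omega)], h x le_rfl]

lemma extendConst_dualKernel_mulVec {N M : ℕ} (hMN : M < N) (v : ℕ → ℝ) (f : Fin (N + 1) → ℝ) :
    extendConst (dualKernel N M v *ᵥ f) = dualKernelOp M v (extendConst f) := by
  funext i
  rw [extendConst, dualKernel_mulVec]
  by_cases hi : i ≤ N
  · simp only [min_eq_left hi]
  · simp only [min_eq_right (le_of_not_ge hi), dualKernelOp, if_neg (show ¬ N ≤ M by omega),
      if_neg (show ¬ i ≤ M by omega), extendConst_of_le f (le_of_not_ge hi)]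

theorem dualKernel_mul_bdGen {N M : ℕ} {b d v : ℕ → ℝ} {l : ℝ} (hMN : M < N)
    (hv : ∀ x ≤ M, 0 < v x) (hrec : ∀ z < M, v (z + 1) * d (z + 1) = flux b l v z)
    (hflux : flux b l v M = 0) (hdz : ∀ x, M < x → d x = 0) (hd0 : d 0 = 0) :
    dualKernel N M v * bdGen N b d
      = bdGen N (dualBirth M l b v) (dualDeath M d v) * dualKernel N M v := by
  refine ext_iff_mulVec.2 fun f => funext fun x => ?_
  rw [← mulVec_mulVec, ← mulVec_mulVec, dualKernel_mulVec,
    bdGen_mulVec (by simp [dualDeath]), extendConst_dualKernel_mulVec hMN,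
    dualKernelOp_congr v (g := bdGenOp b d (extendConst f)) fun i hi => ?_,
    dualKernelOp_bdGenOp hv hrec hflux hdz]
  have := bdGen_mulVec (b := b) hd0 f ⟨i, by omega⟩
  simp only [extendConst, min_eq_left (show i ≤ N by omega)]
  exact this

section DualKernel

variable {N M : ℕ} {v : ℕ → ℝ}

lemma dualKernel_nonneg (hv : ∀ x ≤ M, 0 < v x) (x y : Fin (N + 1)) :
    0 ≤ dualKernel N M v x y := by
  simp only [dualKernel, of_apply]
  split_ifs with hx
  exacts [(div_pos (hv _ (by omega)) (cumSum_pos hv hx)).le, le_rfl, zero_le_one, le_rfl]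

lemma dualKernel_eq_zero_of_lt {x y : Fin (N + 1)} (hxy : x < y) : dualKernel N M v x y = 0 := by
  simp only [dualKernel, of_apply, Fin.lt_def] at hxy ⊢
  split_ifs <;> first | rfl | omega

lemma dualKernel_self_of_lt {x : Fin (N + 1)} (hx : M < x) : dualKernel N M v x x = 1 := by
  simp [dualKernel, show ¬ (x : ℕ) ≤ M by omega]

lemma sum_dualKernel (hv : ∀ x ≤ M, 0 < v x) (x : Fin (N + 1)) :
    ∑ y, dualKernel N M v x y = 1 := by
  have h := dualKernel_mulVec (M := M) v 1 x
  simp only [mulVec, dotProduct, Pi.one_apply, mul_one] at h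
  rw [h, dualKernelOp]
  split_ifs with hx
  · simp only [extendConst, Pi.one_apply, mul_one]
    exact div_self (cumSum_pos hv hx).ne'
  · rfl

lemma sum_filter_le_dualKernel (hv : ∀ x ≤ M, 0 < v x) (x : Fin (N + 1)) :
    ∑ y ∈ univ.filter (fun y => y ≤ x), dualKernel N M v x y = 1 := by
  rw [sum_filter_of_ne fun y _ h => not_lt.1 fun hxy => h (dualKernel_eq_zero_of_lt hxy),
    sum_dualKernel hv]

end DualKernel

section DualRates

variable {M : ℕ} {v : ℕ → ℝ} (hv : ∀ x ≤ M, 0 < v x)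
include hv

lemma dualBirth_pos {N : ℕ} {l : ℝ} {b : ℕ → ℝ} (hl : 0 < l)
    (hb : ∀ x, 1 ≤ x → x ≤ N → 0 < b x) {x : ℕ} (hx1 : 1 ≤ x) (hxN : x ≤ N) :
    0 < dualBirth M l b v x := by
  unfold dualBirth
  split_ifs with hxM
  · exact div_pos (mul_pos (mul_pos (hv _ (by omega)) (hb x hx1 hxN)) (cumSum_pos hv hxM))
      (mul_pos (hv x hxM) (cumSum_pos hv (by omega)))
  exacts [hl, hb x hx1 hxN]

lemma dualDeath_pos {d : ℕ → ℝ} (hd : ∀ x, 1 ≤ x → x ≤ M → 0 < d x) {x : ℕ} (hx1 : 1 ≤ x)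
    (hxM : x ≤ M - 1) : 0 < dualDeath M d v x := by
  rw [dualDeath, if_pos ⟨hx1, by omega⟩]
  exact div_pos (mul_pos (cumSum_pos hv (by omega))
    (mul_pos (hv _ (by omega)) (hd _ (by omega) (by omega))))
    (mul_pos (hv x (by omega)) (cumSum_pos hv (by omega)))

end DualRates

lemma dualDeath_eq_zero {M : ℕ} {d v : ℕ → ℝ} {x : ℕ} (hx : x = 0 ∨ M ≤ x) :
    dualDeath M d v x = 0 :=
  if_neg (by omega)

end

theorem stmt6_general (N M : ℕ) (hMN : M + 1 ≤ N) (b d : ℕ → ℝ)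
    (hb : ∀ x, 1 ≤ x → x ≤ N → 0 < b x)
    (hd : ∀ x, 1 ≤ x → x ≤ M → 0 < d x)
    (hdz : ∀ x, M + 1 ≤ x → d x = 0) (hd0 : d 0 = 0) :
    ∃ (K : Matrix (Fin (N+1)) (Fin (N+1)) ℝ) (b' d' : ℕ → ℝ),
      (∀ x y, 0 ≤ K x y) ∧ (∀ x, ∑ y, K x y = 1) ∧
      (∀ x : Fin (N+1), ∑ y ∈ Finset.univ.filter (fun y => y ≤ x), K x y = 1) ∧
      (∀ x : Fin (N+1), M + 1 ≤ (x : ℕ) → K x x = 1) ∧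
      (∀ x, 1 ≤ x → x ≤ N → 0 < b' x) ∧
      (∀ x, 1 ≤ x → x ≤ M - 1 → 0 < d' x) ∧
      (∀ x, M ≤ x → d' x = 0) ∧ d' 0 = 0 ∧
      K * bdGen N b d = bdGen N b' d' * K := by
  obtain ⟨l, hl, hv, hflux⟩ := exists_eigenVec_pos hd (fun x h1 h2 => hb x h1 (by omega))
  have hrec : ∀ z < M, eigenVec b d l (z + 1) * d (z + 1) = flux b l (eigenVec b d l) z :=
    fun z hz => eigenVec_succ_mul (hd _ (by omega) hz).ne'
  exact ⟨dualKernel N M (eigenVec b d l), dualBirth M l b (eigenVec b d l),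
    dualDeath M d (eigenVec b d l), dualKernel_nonneg hv, sum_dualKernel hv,
    sum_filter_le_dualKernel hv, fun x hx => dualKernel_self_of_lt hx,
    fun x => dualBirth_pos hv hl hb, fun x => dualDeath_pos hv hd,
    fun x hx => dualDeath_eq_zero (.inr hx), dualDeath_eq_zero (.inl rfl),
    dualKernel_mul_bdGen (by omega) hv hrec hflux hdz hd0⟩

/-- Inductive step for the fast process: there exist a stochastic matrix `K`
supported on `{0,...,x}` at `x`, with `K(x,x) = 1` for `x ≥ M+1`, and a
birth-and-death generator `G'` with positive birth rates, death rates positive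
up to `M-1` and zero from `M` on, such that `KG = G'K`. -/
theorem stmt6 (N M : ℕ) (hM : 1 ≤ M) (hMN : M + 1 ≤ N) (b d : ℕ → ℝ)
    (hb : ∀ x, 1 ≤ x → x ≤ N → 0 < b x)
    (hd : ∀ x, 1 ≤ x → x ≤ M → 0 < d x)
    (hdz : ∀ x, M + 1 ≤ x → d x = 0) (hd0 : d 0 = 0) :
    ∃ (K : Matrix (Fin (N+1)) (Fin (N+1)) ℝ) (b' d' : ℕ → ℝ),
      (∀ x y, 0 ≤ K x y) ∧ (∀ x, ∑ y, K x y = 1) ∧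
      (∀ x : Fin (N+1), ∑ y ∈ Finset.univ.filter (fun y => y ≤ x), K x y = 1) ∧
      (∀ x : Fin (N+1), M + 1 ≤ (x : ℕ) → K x x = 1) ∧
      (∀ x, 1 ≤ x → x ≤ N → 0 < b' x) ∧
      (∀ x, 1 ≤ x → x ≤ M - 1 → 0 < d' x) ∧
      (∀ x, M ≤ x → d' x = 0) ∧ d' 0 = 0 ∧
      K * bdGen N b d = bdGen N b' d' * K :=
  stmt6_general N M hMN b d hb hd hdz hd0
end

section
/- Define K(x,y) := 1_{y≤x} ρ(y)/H(x) for x ≤ M and K(x,y) := 1_{y=x} for x ≥ M+1, where H(x) = Σ_{y=0}^x ρ(y) and ρ is a quasi-stationary vector (ρ > 0 on {0,...,M}, ρ = 0 above M, Σρ = 1, G†ρ = -λρ + λδ_{M+1} with λ = b_{M+1}ρ(M)). Then K is an invertible stochastic matrix, and the unique matrix G' := KGK⁻¹ has off-diagonal entries: G'(x,x+1) = b_{x+1}ρ(x)H(x+1)/(H(x)ρ(x+1)) for x < M, G'(M,M+1) = λ, G'(x,x+1) = b_{x+1} for x > M, G'(x,x-1) = d_{x+1}ρ(x+1)H(x-1)/(H(x)ρ(x))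 for 0 < x < M, G'(x,x-1) = 0 for x ≥ M, and all other off-diagonal entries zero. -/
open Matrix Polynomial Finset

/-- `H(x) = Σ_{y=0}^{x} ρ(y)`. -/
def Hfun (ρ : ℕ → ℝ) (x : ℕ) : ℝ := ∑ y ∈ Finset.range (x+1), ρ y

/-- The kernel `K(x,y) = 1_{y≤x} ρ(y)/H(x)` for `x ≤ M`, `K(x,y) = 1_{y=x}`
for `x ≥ M+1`. -/
noncomputable def Kqs (N M : ℕ) (ρ : ℕ → ℝ) : Matrix (Fin (N+1)) (Fin (N+1)) ℝ :=
  Matrix.of fun x y =>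
    if (x : ℕ) ≤ M then (if (y : ℕ) ≤ (x : ℕ) then ρ (y : ℕ) / Hfun ρ (x : ℕ) else 0)
    else (if y = x then 1 else 0)

/-!
For `x ≤ M` row `x` of `K` is `ρ 1_{[0,x]} / H(x)`. The balance equations `(ρG)(y) = -λρ(y)`,
`y ≤ M`, give `(ρ 1_{[0,x]}) G = -λ ρ 1_{[0,x]} - ρ(x+1) d_{x+1} δ_x + ρ(x) b_{x+1} δ_{x+1}`,
and `ρ(x) δ_x = H(x) K(x,·) - H(x-1) K(x-1,·)`, so row `x` of `KG` is a combination of rows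
`x-1, x, x+1` of `K`: `KG = G'K` for a birth-and-death generator `G'`. Its diagonal matches
because of the flux identity `b_{x+1}ρ(x) - d_{x+1}ρ(x+1) = λH(x)`, obtained by summing the
balance equations over `[0,x]`. For `x > M` row `x` of `K` is `δ_x`, and `G'` agrees with `G`
there. As `K` is lower triangular with positive diagonal, `G' = KGK⁻¹`.
-/

-- `ℕ`-indexed entries of `bdGen` and `Kqs`: the neighbours `x ± 1` of a state need no `Fin`
-- arithmetic.
def bdGenEntry (N : ℕ) (b d : ℕ → ℝ) (x y : ℕ) : ℝ :=
  if y = x + 1 then b (x + 1)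
  else if y + 1 = x then d x
  else if y = x then -((if x < N then b (x + 1) else 0) + d x)
  else 0

theorem bdGen_apply (N : ℕ) (b d : ℕ → ℝ) (x y : Fin (N+1)) :
    bdGen N b d x y = bdGenEntry N b d x y := by
  simp only [bdGen, bdGenEntry, Matrix.of_apply, Fin.ext_iff]

noncomputable def KqsEntry (M : ℕ) (ρ : ℕ → ℝ) (x y : ℕ) : ℝ :=
  if x ≤ M then (if y ≤ x then ρ y else 0) / Hfun ρ x else if y = x then 1 else 0

theorem Kqs_apply (N M : ℕ) (ρ : ℕ → ℝ) (x y : Fin (N + 1)) :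
    Kqs N M ρ x y = KqsEntry M ρ x y := by
  simp only [Kqs, KqsEntry, Matrix.of_apply, Fin.ext_iff, ite_div, zero_div]

section BirthDeath

variable (N : ℕ) (b d : ℕ → ℝ)

theorem sum_range_mul_bdGenEntry (c : ℕ → ℝ) (n y : ℕ) :
    ∑ z ∈ range n, c z * bdGenEntry N b d z y
      = (if 0 < y ∧ y - 1 < n then c (y - 1) * b y else 0)
      - (if y < n then c y * ((if y < N then b (y + 1) else 0) + d y) else 0)
      + (if y + 1 < n then c (y + 1) * d (y + 1) else 0) := by
  have h : ∀ z, c z * bdGenEntry N b d z y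
      = (if z = y - 1 then (if 0 < y then c (y - 1) * b y else 0) else 0)
      - (if z = y then c y * ((if y < N then b (y + 1) else 0) + d y) else 0)
      + (if z = y + 1 then c (y + 1) * d (y + 1) else 0) := by
    intro z
    unfold bdGenEntry
    split_ifs <;> first
      | omega | (subst_vars; simp only [Nat.add_sub_cancel]; ring) | (subst_vars; ring)
  simp only [h, sum_add_distrib, sum_sub_distrib, sum_ite_eq', mem_range]
  split_ifs <;> first | omega | ring

theorem sum_bdGenEntry_mul (c : ℕ → ℝ) {x : ℕ} (hx : x ≤ N) :
    ∑ z ∈ range (N + 1), bdGenEntry N b d x z * c z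
      = (if 0 < x then d x * c (x - 1) else 0)
      - ((if x < N then b (x + 1) else 0) + d x) * c x
      + (if x < N then b (x + 1) * c (x + 1) else 0) := by
  have h : ∀ z, bdGenEntry N b d x z * c z
      = (if z = x - 1 then (if 0 < x then d x * c (x - 1) else 0) else 0)
      - (if z = x then ((if x < N then b (x + 1) else 0) + d x) * c x else 0)
      + (if z = x + 1 then b (x + 1) * c (x + 1) else 0) := by
    intro z
    unfold bdGenEntry
    split_ifs <;> first
      | omega | (subst_vars; simp only [Nat.add_sub_cancel]; ring) | (subst_vars; ring)
  simp only [h, sum_add_distrib, sum_sub_distrib, sum_ite_eq', mem_range]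
  split_ifs <;> first | omega | ring

end BirthDeath

theorem Hfun_zero (ρ : ℕ → ℝ) : Hfun ρ 0 = ρ 0 := by simp [Hfun]

theorem Hfun_succ (ρ : ℕ → ℝ) (x : ℕ) : Hfun ρ (x + 1) = Hfun ρ x + ρ (x + 1) :=
  sum_range_succ ρ (x + 1)

theorem Hfun_pos {ρ : ℕ → ℝ} {x : ℕ} (hρ : ∀ z ≤ x, 0 < ρ z) : 0 < Hfun ρ x :=
  sum_pos (fun z hz => hρ z (Nat.lt_succ_iff.mp (mem_range.mp hz))) nonempty_range_add_one

theorem Hfun_eq_sum_range {ρ : ℕ → ℝ} {M N : ℕ} (hMN : M ≤ N)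
    (hρ0 : ∀ x, M + 1 ≤ x → ρ x = 0) :
    Hfun ρ M = ∑ x ∈ range (N + 1), ρ x :=
  sum_subset (range_subset_range.mpr (by omega))
    fun x hx hxM => hρ0 x (by simp only [mem_range] at hx hxM; omega)

def BalanceAt (b d ρ : ℕ → ℝ) (lam : ℝ) (y : ℕ) : Prop :=
  (if 0 < y then ρ (y - 1) * b y else 0) - ρ y * (b (y + 1) + d y) + ρ (y + 1) * d (y + 1)
    = -lam * ρ y

theorem flux_eq_of_balance {b d ρ : ℕ → ℝ} {lam : ℝ} (hd0 : d 0 = 0) {x : ℕ}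
    (hbal : ∀ y ≤ x, BalanceAt b d ρ lam y) :
    b (x + 1) * ρ x - d (x + 1) * ρ (x + 1) = lam * Hfun ρ x := by
  induction x with
  | zero =>
    have h := hbal 0 le_rfl
    simp only [BalanceAt, lt_irrefl, if_false, hd0] at h
    rw [Hfun_zero]
    linarith
  | succ x ih =>
    have h := hbal (x + 1) le_rfl
    simp only [BalanceAt, Nat.succ_pos, if_true, Nat.add_sub_cancel] at h
    have ih := ih fun y hy => hbal y (by omega)
    rw [Hfun_succ]
    linarith

theorem balance_of_vecMul_eq {N M : ℕ} {b d ρ : ℕ → ℝ} {lam : ℝ} (hMN : M + 1 ≤ N)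
    (hquasi : vecMul (fun x : Fin (N + 1) => ρ x) (bdGen N b d)
      = fun x : Fin (N + 1) => -lam * ρ x + lam * (if (x : ℕ) = M + 1 then (1 : ℝ) else 0))
    {y : ℕ} (hy : y ≤ M) : BalanceAt b d ρ lam y := by
  have h := congrFun hquasi ⟨y, by omega⟩
  simp only [vecMul, dotProduct, bdGen_apply] at h
  rw [Fin.sum_univ_eq_sum_range (fun z => ρ z * bdGenEntry N b d z y),
    sum_range_mul_bdGenEntry] at h
  simp only [if_neg (show y ≠ M + 1 by omega), if_pos (show y < N by omega),
    if_pos (show y < N + 1 by omega), if_pos (show y + 1 < N + 1 by omega),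
    show y - 1 < N + 1 by omega, and_true] at h
  rw [BalanceAt]
  linarith

theorem sum_range_mul_bdGenEntry_of_balance {N : ℕ} {b d ρ : ℕ → ℝ} {lam : ℝ} {x : ℕ}
    (hxN : x < N)
    (hbal : ∀ y ≤ x, BalanceAt b d ρ lam y) (y : ℕ) :
    ∑ z ∈ range (x + 1), ρ z * bdGenEntry N b d z y
      = -lam * (if y ≤ x then ρ y else 0) - (if y = x then ρ (x + 1) * d (x + 1) else 0)
        + (if y = x + 1 then ρ x * b (x + 1) else 0) := by
  rw [sum_range_mul_bdGenEntry]
  by_cases hy : y ≤ x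
  · have h : BalanceAt b d ρ lam y := hbal y hy
    unfold BalanceAt at h
    split_ifs at h ⊢ <;> first | omega | (subst_vars; linarith)
  · split_ifs <;> first | omega | (subst_vars; simp only [Nat.add_sub_cancel]; ring) | ring

theorem KqsEntry_of_le {M : ℕ} (ρ : ℕ → ℝ) {x : ℕ} (hx : x ≤ M) (y : ℕ) :
    KqsEntry M ρ x y = (if y ≤ x then ρ y else 0) / Hfun ρ x := if_pos hx

theorem KqsEntry_of_lt {M : ℕ} (ρ : ℕ → ℝ) {x : ℕ} (hx : M < x) (y : ℕ) :
    KqsEntry M ρ x y = if y = x then 1 else 0 := if_neg (by omega)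

theorem sum_KqsEntry_mul {M N : ℕ} {ρ : ℕ → ℝ} {x : ℕ} (hx : x ≤ M) (hMN : M ≤ N)
    (f : ℕ → ℝ) :
    ∑ z ∈ range (N + 1), KqsEntry M ρ x z * f z
      = (∑ z ∈ range (x + 1), ρ z * f z) / Hfun ρ x := by
  rw [sum_div, ← sum_subset (range_subset_range.mpr (show x + 1 ≤ N + 1 by omega))]
  · refine sum_congr rfl fun z hz => ?_
    rw [KqsEntry_of_le ρ hx, if_pos (Nat.lt_succ_iff.mp (mem_range.mp hz))]
    ring
  · intro z _ hz
    rw [KqsEntry_of_le ρ hx, if_neg (by simp only [mem_range] at hz; omega), zero_div, zero_mul]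

noncomputable def intertwinedBirth (M : ℕ) (b ρ : ℕ → ℝ) (lam : ℝ) (y : ℕ) : ℝ :=
  if y ≤ M then b y * ρ (y - 1) * Hfun ρ y / (Hfun ρ (y - 1) * ρ y)
  else if y = M + 1 then lam else b y

noncomputable def intertwinedDeath (M : ℕ) (d ρ : ℕ → ℝ) (x : ℕ) : ℝ :=
  if 0 < x ∧ x < M then d (x + 1) * ρ (x + 1) * Hfun ρ (x - 1) / (Hfun ρ x * ρ x) else 0

theorem intertwinedBirth_succ (M : ℕ) (b ρ : ℕ → ℝ) (lam : ℝ) (x : ℕ) :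
    intertwinedBirth M b ρ lam (x + 1)
      = if x < M then b (x + 1) * ρ x * Hfun ρ (x + 1) / (Hfun ρ x * ρ (x + 1))
        else if x = M then lam else b (x + 1) := by
  simp only [intertwinedBirth, Nat.add_sub_cancel, Nat.add_one_le_iff, add_left_inj]

/-- `Hfun ρ x - ρ x` is `H(x-1)` for `x > 0` and `0` for `x = 0`, where the rate vanishes. -/
theorem intertwinedDeath_of_lt {M : ℕ} (d : ℕ → ℝ) {ρ : ℕ → ℝ} {x : ℕ}
    (hx : x < M) :
    intertwinedDeath M d ρ x
      = d (x + 1) * ρ (x + 1) * (Hfun ρ x - ρ x) / (Hfun ρ x * ρ x) := by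
  rcases x with _ | x
  · simp [intertwinedDeath, Hfun_zero]
  · simp [intertwinedDeath, hx, Hfun_succ]

theorem ite_le_sub_ite_lt {α : Type*} [AddGroup α] (f : ℕ → α) (x y : ℕ) :
    (if y ≤ x then f y else 0) - (if y < x then f y else 0) = if y = x then f x else 0 := by
  split_ifs <;> first | omega | (subst_vars; simp)

section Intertwining

variable {N M : ℕ} {b d ρ : ℕ → ℝ} {lam : ℝ}

local notation "G'" => bdGenEntry N (intertwinedBirth M b ρ lam) (intertwinedDeath M d ρ)

theorem sum_KqsEntry_mul_bdGenEntry_of_lt (hMN : M < N) (hρ : ∀ z ≤ M, 0 < ρ z)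
    (hd0 : d 0 = 0)
    (hbal : ∀ y ≤ M, BalanceAt b d ρ lam y) {x : ℕ} (hx : x < M) (y : ℕ) :
    ∑ z ∈ range (N + 1), KqsEntry M ρ x z * bdGenEntry N b d z y
      = ∑ z ∈ range (N + 1), G' x z * KqsEntry M ρ z y := by
  have hbal' : ∀ z ≤ x, BalanceAt b d ρ lam z := fun z hz => hbal z (by omega)
  have hflux := flux_eq_of_balance hd0 hbal'
  have hx0 : 0 < ρ x := hρ x (by omega)
  have hx1 : 0 < ρ (x + 1) := hρ (x + 1) (by omega)
  have hH : 0 < Hfun ρ x := Hfun_pos fun z hz => hρ z (by omega)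
  have hprev : (if 0 < x then intertwinedDeath M d ρ x * KqsEntry M ρ (x - 1) y else 0)
      = d (x + 1) * ρ (x + 1) / (Hfun ρ x * ρ x) * (if y < x then ρ y else 0) := by
    rcases x with _ | x
    · simp
    · have hH' : 0 < Hfun ρ x := Hfun_pos fun z hz => hρ z (by omega)
      rw [if_pos x.succ_pos, intertwinedDeath, if_pos ⟨x.succ_pos, hx⟩, Nat.add_sub_cancel,
        KqsEntry_of_le ρ (by omega)]
      simp only [Nat.lt_succ_iff]
      field_simp
  have hdiag : (if y = x then ρ (x + 1) * d (x + 1) else 0)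
      = ρ (x + 1) * d (x + 1) / ρ x
        * ((if y ≤ x then ρ y else 0) - (if y < x then ρ y else 0)) := by
    rw [ite_le_sub_ite_lt, mul_ite, mul_zero, div_mul_cancel₀ _ hx0.ne']
  have hnext : (if y = x + 1 then ρ x * b (x + 1) else 0)
      = ρ x * b (x + 1) / ρ (x + 1)
        * ((if y ≤ x + 1 then ρ y else 0) - (if y ≤ x then ρ y else 0)) := by
    simp only [← Nat.lt_succ_iff (n := x), ite_le_sub_ite_lt, mul_ite, mul_zero,
      div_mul_cancel₀ _ hx1.ne']
  rw [sum_KqsEntry_mul hx.le hMN.le, sum_range_mul_bdGenEntry_of_balance (by omega) hbal',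
    sum_bdGenEntry_mul _ _ _ _ (by omega), hprev, hdiag, hnext,
    intertwinedBirth_succ, if_pos hx, intertwinedDeath_of_lt d hx,
    KqsEntry_of_le ρ hx.le, KqsEntry_of_le ρ (show x + 1 ≤ M by omega), Hfun_succ]
  simp only [if_pos (show x < N by omega)]
  field_simp
  linear_combination ρ (x + 1) * ρ x * (if y ≤ x then ρ y else 0) * hflux

theorem sum_KqsEntry_mul_bdGenEntry_self (hMN : M < N)
    (hbal : ∀ y ≤ M, BalanceAt b d ρ lam y)
    (hdM : d (M + 1) = 0) (hHM : Hfun ρ M = 1) (hlam : lam = b (M + 1) * ρ M) (y : ℕ) :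
    ∑ z ∈ range (N + 1), KqsEntry M ρ M z * bdGenEntry N b d z y
      = ∑ z ∈ range (N + 1), G' M z * KqsEntry M ρ z y := by
  have hdeath : intertwinedDeath M d ρ M = 0 := if_neg (by omega)
  rw [sum_KqsEntry_mul le_rfl hMN.le, sum_range_mul_bdGenEntry_of_balance hMN hbal,
    sum_bdGenEntry_mul _ _ _ _ hMN.le, hdeath, intertwinedBirth_succ, if_neg (lt_irrefl M),
    if_pos rfl, KqsEntry_of_le ρ le_rfl, KqsEntry_of_lt ρ (Nat.lt_succ_self M), hHM, hdM, hlam]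
  simp only [if_pos hMN, zero_mul, ite_self, Nat.succ_eq_add_one]
  split_ifs <;> ring

theorem sum_KqsEntry_mul_bdGenEntry_of_gt (hdz : ∀ x, M + 1 ≤ x → d x = 0) {x : ℕ}
    (hx : M < x) (hxN : x ≤ N) {y : ℕ} (hy : y ≤ N) :
    ∑ z ∈ range (N + 1), KqsEntry M ρ x z * bdGenEntry N b d z y
      = ∑ z ∈ range (N + 1), G' x z * KqsEntry M ρ z y := by
  have hdeath : intertwinedDeath M d ρ x = 0 := if_neg (by omega)
  have hbirth : intertwinedBirth M b ρ lam (x + 1) = b (x + 1) := by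
    rw [intertwinedBirth_succ, if_neg (by omega), if_neg (by omega)]
  simp only [KqsEntry_of_lt ρ hx, ite_mul, one_mul, zero_mul, sum_ite_eq', mem_range,
    if_pos (Nat.lt_succ_of_le hxN)]
  rw [sum_bdGenEntry_mul _ _ _ _ hxN, hdeath, hbirth, KqsEntry_of_lt ρ hx,
    KqsEntry_of_lt ρ (Nat.lt_succ_of_lt hx)]
  unfold bdGenEntry
  rw [hdz x hx]
  split_ifs <;> first | omega | ring

end Intertwining

theorem mul_apply_eq_sum_range {R : Type*} [NonUnitalNonAssocSemiring R] {N : ℕ}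
    {A B : Matrix (Fin (N + 1)) (Fin (N + 1)) R} {f g : ℕ → ℕ → R} (hA : ∀ i j, A i j = f i j) (hB : ∀ i j, B i j = g i j)
    (i j : Fin (N + 1)) :
    (A * B) i j = ∑ z ∈ range (N + 1), f i z * g z j := by
  rw [Matrix.mul_apply, ← Fin.sum_univ_eq_sum_range (fun z => f i z * g z j)]
  simp only [hA, hB]

theorem Kqs_mul_bdGen {N M : ℕ} {b d ρ : ℕ → ℝ} {lam : ℝ} (hMN : M < N)
    (hρ : ∀ z ≤ M, 0 < ρ z) (hd0 : d 0 = 0) (hdz : ∀ x, M + 1 ≤ x → d x = 0)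
    (hbal : ∀ y ≤ M, BalanceAt b d ρ lam y)
    (hHM : Hfun ρ M = 1) (hlam : lam = b (M + 1) * ρ M) :
    Kqs N M ρ * bdGen N b d
      = bdGen N (intertwinedBirth M b ρ lam) (intertwinedDeath M d ρ) * Kqs N M ρ := by
  ext x y
  rw [mul_apply_eq_sum_range (Kqs_apply N M ρ) (bdGen_apply N b d),
    mul_apply_eq_sum_range (bdGen_apply N _ _) (Kqs_apply N M ρ)]
  rcases lt_trichotomy (x : ℕ) M with hx | hx | hx
  · exact sum_KqsEntry_mul_bdGenEntry_of_lt hMN hρ hd0 hbal hx y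
  · rw [hx]
    exact sum_KqsEntry_mul_bdGenEntry_self hMN hbal (hdz _ le_rfl) hHM hlam y
  · exact sum_KqsEntry_mul_bdGenEntry_of_gt hdz hx (Nat.lt_succ_iff.mp x.isLt)
      (Nat.lt_succ_iff.mp y.isLt)

theorem Kqs_blockTriangular (N M : ℕ) (ρ : ℕ → ℝ) :
    (Kqs N M ρ).BlockTriangular OrderDual.toDual := by
  intro i j hij
  have : (i : ℕ) < j := hij
  simp only [Kqs, Matrix.of_apply]
  split_ifs <;> first | rfl | omega

theorem isUnit_det_Kqs {N M : ℕ} {ρ : ℕ → ℝ} (hρ : ∀ z ≤ M, 0 < ρ z) :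
    IsUnit (Kqs N M ρ).det := by
  rw [det_of_isLowerTriangular _ (Kqs_blockTriangular N M ρ), isUnit_iff_ne_zero,
    prod_ne_zero_iff]
  intro i _
  rcases le_or_gt (i : ℕ) M with h | h
  · rw [Kqs_apply, KqsEntry_of_le ρ h, if_pos le_rfl]
    exact div_ne_zero (hρ i h).ne' (Hfun_pos fun z hz => hρ z (hz.trans h)).ne'
  · rw [Kqs_apply, KqsEntry_of_lt ρ h, if_pos rfl]
    exact one_ne_zero

theorem Kqs_nonneg {N M : ℕ} {ρ : ℕ → ℝ} (hρ : ∀ z ≤ M, 0 < ρ z)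
    (x y : Fin (N + 1)) :
    0 ≤ Kqs N M ρ x y := by
  rcases le_or_gt (x : ℕ) M with h | h
  · rw [Kqs_apply, KqsEntry_of_le ρ h]
    refine div_nonneg ?_ (Hfun_pos fun z hz => hρ z (hz.trans h)).le
    split_ifs with hy
    exacts [(hρ y (hy.trans h)).le, le_rfl]
  · rw [Kqs_apply, KqsEntry_of_lt ρ h]
    split_ifs <;> norm_num

theorem sum_Kqs_row {N M : ℕ} {ρ : ℕ → ℝ} (hMN : M ≤ N) (hρ : ∀ z ≤ M, 0 < ρ z)
    (x : Fin (N + 1)) : ∑ y, Kqs N M ρ x y = 1 := by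
  simp only [Kqs_apply]
  rw [Fin.sum_univ_eq_sum_range (fun z => KqsEntry M ρ x z)]
  rcases le_or_gt (x : ℕ) M with h | h
  · have h1 := sum_KqsEntry_mul (ρ := ρ) h hMN (fun _ => 1)
    simp only [mul_one] at h1
    rw [h1, ← Hfun, div_self (Hfun_pos fun z hz => hρ z (hz.trans h)).ne']
  · simp [KqsEntry_of_lt ρ h, Nat.lt_succ_iff.mp x.isLt]

theorem bdGen_apply_of_ne {N : ℕ} (b d : ℕ → ℝ) {x y : Fin (N + 1)} (hxy : x ≠ y) :
    bdGen N b d x y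
      = if (y : ℕ) = x + 1 then b (x + 1) else if (y : ℕ) + 1 = x then d x else 0 := by
  simp only [bdGen, Matrix.of_apply, if_neg hxy.symm]

theorem stmt8_general (N M : ℕ) (hMN : M + 1 ≤ N) (b d : ℕ → ℝ)
    (hdz : ∀ x, M + 1 ≤ x → d x = 0) (hd0 : d 0 = 0)
    (ρ : ℕ → ℝ) (lam : ℝ)
    (hlam : lam = b (M+1) * ρ M)
    (hρpos : ∀ x, x ≤ M → 0 < ρ x)
    (hρ0 : ∀ x, M + 1 ≤ x → ρ x = 0)
    (hρsum : ∑ x ∈ Finset.range (N+1), ρ x = 1)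
    (hquasi : Matrix.vecMul (fun x : Fin (N+1) => ρ (x : ℕ)) (bdGen N b d)
      = fun x : Fin (N+1) =>
          -lam * ρ (x : ℕ) + lam * (if (x : ℕ) = M + 1 then (1:ℝ) else 0)) :
    IsUnit (Kqs N M ρ).det ∧
    (∀ x y, 0 ≤ Kqs N M ρ x y) ∧ (∀ x, ∑ y, Kqs N M ρ x y = 1) ∧
    (∀ x y : Fin (N+1), x ≠ y →
      (Kqs N M ρ * bdGen N b d * (Kqs N M ρ)⁻¹) x y =
        if (y : ℕ) = (x : ℕ) + 1 then
          (if (x : ℕ) < M then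
            b ((x : ℕ)+1) * ρ (x : ℕ) * Hfun ρ ((x : ℕ)+1)
              / (Hfun ρ (x : ℕ) * ρ ((x : ℕ)+1))
           else if (x : ℕ) = M then lam
           else b ((x : ℕ)+1))
        else if (y : ℕ) + 1 = (x : ℕ) then
          (if 0 < (x : ℕ) ∧ (x : ℕ) < M then
            d ((x : ℕ)+1) * ρ ((x : ℕ)+1) * Hfun ρ ((x : ℕ)-1)
              / (Hfun ρ (x : ℕ) * ρ (x : ℕ))
           else 0)
        else 0) := by
  have hHM : Hfun ρ M = 1 := (Hfun_eq_sum_range (by omega) hρ0).trans hρsum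
  have hbal : ∀ y ≤ M, BalanceAt b d ρ lam y := fun y hy => balance_of_vecMul_eq hMN hquasi hy
  have hdet := isUnit_det_Kqs (N := N) hρpos
  refine ⟨hdet, Kqs_nonneg hρpos, sum_Kqs_row (by omega) hρpos, fun x y hxy => ?_⟩
  rw [Kqs_mul_bdGen hMN hρpos hd0 hdz hbal hHM hlam, Matrix.mul_assoc, mul_nonsing_inv _ hdet,
    Matrix.mul_one, bdGen_apply_of_ne _ _ hxy, intertwinedBirth_succ]
  rfl

/-- With `K` built from a quasi-stationary vector `ρ`, `K` is an invertible
stochastic matrix and `G' = K G K⁻¹` has the explicit birth-and-death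
off-diagonal entries computed in the paper. -/
theorem stmt8 (N M : ℕ) (hM : 1 ≤ M) (hMN : M + 1 ≤ N) (b d : ℕ → ℝ)
    (hb : ∀ x, 1 ≤ x → x ≤ N → 0 < b x)
    (hd : ∀ x, 1 ≤ x → x ≤ M → 0 < d x)
    (hdz : ∀ x, M + 1 ≤ x → d x = 0) (hd0 : d 0 = 0)
    (ρ : ℕ → ℝ) (lam : ℝ)
    (hlam : lam = b (M+1) * ρ M) (hlampos : 0 < lam)
    (hρpos : ∀ x, x ≤ M → 0 < ρ x)
    (hρ0 : ∀ x, M + 1 ≤ x → ρ x = 0)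
    (hρsum : ∑ x ∈ Finset.range (N+1), ρ x = 1)
    (hquasi : Matrix.vecMul (fun x : Fin (N+1) => ρ (x : ℕ)) (bdGen N b d)
      = fun x : Fin (N+1) =>
          -lam * ρ (x : ℕ) + lam * (if (x : ℕ) = M + 1 then (1:ℝ) else 0)) :
    IsUnit (Kqs N M ρ).det ∧
    (∀ x y, 0 ≤ Kqs N M ρ x y) ∧ (∀ x, ∑ y, Kqs N M ρ x y = 1) ∧
    (∀ x y : Fin (N+1), x ≠ y →
      (Kqs N M ρ * bdGen N b d * (Kqs N M ρ)⁻¹) x y =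
        if (y : ℕ) = (x : ℕ) + 1 then
          (if (x : ℕ) < M then
            b ((x : ℕ)+1) * ρ (x : ℕ) * Hfun ρ ((x : ℕ)+1)
              / (Hfun ρ (x : ℕ) * ρ ((x : ℕ)+1))
           else if (x : ℕ) = M then lam
           else b ((x : ℕ)+1))
        else if (y : ℕ) + 1 = (x : ℕ) then
          (if 0 < (x : ℕ) ∧ (x : ℕ) < M then
            d ((x : ℕ)+1) * ρ ((x : ℕ)+1) * Hfun ρ ((x : ℕ)-1)
              / (Hfun ρ (x : ℕ) * ρ (x : ℕ))
           else 0)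
        else 0) :=
  stmt8_general N M hMN b d hdz hd0 ρ lam hlam hρpos hρ0 hρsum hquasi
end

section
/- In the inductive construction of Proposition on the slow process, the constants C_y defined by C_M := 1 and C_y := (1/f(y))(1 - Σ_{y'=M}^{y-1} C_{y'} f(y)) for M+1 ≤ y ≤ N-1 are all strictly positive, where f is strictly decreasing and positive on {M,...,N-1}. -/
open Finset

/-!
The recursion says exactly that `f y * ∑_{y' ∈ [M, y]} C y' = 1`, i.e. the partial sums of `C`
are `1 / f y`. Hence `C (y + 1) = 1 / f (y + 1) - 1 / f y`, which is positive because `f` is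
positive and strictly decreasing.
-/

section PartialSums

variable {M K : ℕ} {f C : ℕ → ℝ}

theorem sum_Ico_mul_eq_one (hf : ∀ y, M + 1 ≤ y → y ≤ K → f y ≠ 0) (hCM : C M * f M = 1)
    (hC : ∀ y, M + 1 ≤ y → y ≤ K → C y = (1 / f y) * (1 - ∑ y' ∈ Ico M y, C y' * f y))
    {y : ℕ} (hMy : M ≤ y) (hyK : y ≤ K) :
    (∑ y' ∈ Ico M (y + 1), C y') * f y = 1 := by
  rcases hMy.eq_or_lt with rfl | hlt
  · simpa using hCM
  have hfy := hf y hlt hyK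
  rw [sum_Ico_succ_top hMy, add_mul, hC y hlt hyK, ← sum_mul]
  field_simp
  ring

theorem eq_inv_sub_inv (hf : ∀ y, M + 1 ≤ y → y ≤ K → f y ≠ 0) (hCM : C M * f M = 1)
    (hC : ∀ y, M + 1 ≤ y → y ≤ K → C y = (1 / f y) * (1 - ∑ y' ∈ Ico M y, C y' * f y))
    {y : ℕ} (hMy : M ≤ y) (hyK : y + 1 ≤ K) :
    C (y + 1) = (f (y + 1))⁻¹ - (f y)⁻¹ := by
  have partial_sum {z : ℕ} (hMz : M ≤ z) (hzK : z ≤ K) :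
      ∑ y' ∈ Ico M (z + 1), C y' = (f z)⁻¹ :=
    eq_inv_of_mul_eq_one_left (sum_Ico_mul_eq_one hf hCM hC hMz hzK)
  rw [← partial_sum (by omega) hyK, ← partial_sum hMy (by omega),
    sum_Ico_succ_top (by omega : M ≤ y + 1)]
  ring

end PartialSums

theorem stmt14_general (N M : ℕ) (f : ℕ → ℝ)
    (hf : StrictAntiOn f (Set.Icc M N)) (hfM : f M = 1) (hfN : f N = 0)
    (C : ℕ → ℝ) (hCM : C M = 1)
    (hC : ∀ y, M + 1 ≤ y → y ≤ N - 1 →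
      C y = (1 / f y) * (1 - ∑ y' ∈ Finset.Ico M y, C y' * f y)) :
    ∀ y, M ≤ y → y ≤ N - 1 → 0 < C y := by
  have f_pos {y : ℕ} (hMy : M ≤ y) (hyN : y < N) : 0 < f y :=
    hfN ▸ hf ⟨hMy, hyN.le⟩ ⟨by omega, le_rfl⟩ hyN
  intro y hMy hyN
  rcases hMy.eq_or_lt with rfl | hlt
  · rw [hCM]
    exact one_pos
  obtain ⟨z, rfl⟩ : ∃ z, y = z + 1 := ⟨y - 1, by omega⟩
  have f_ne_zero : ∀ y, M + 1 ≤ y → y ≤ N - 1 → f y ≠ 0 :=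
    fun y hMy hyN => (f_pos (by omega) (by omega)).ne'
  rw [eq_inv_sub_inv f_ne_zero (by rw [hCM, hfM, one_mul]) hC (by omega) hyN, sub_pos]
  exact inv_strictAnti₀ (f_pos (by omega) (by omega))
    (hf ⟨by omega, by omega⟩ ⟨by omega, by omega⟩ (by omega))

/-- The constants `C_y` of the slow inductive step, defined by `C_M = 1` and
`C_y = (1/f(y))(1 - Σ_{y'=M}^{y-1} C_{y'} f(y))` for `M+1 ≤ y ≤ N-1`, are
strictly positive, where `f` is strictly decreasing on `{M,...,N}` with
`f(M) = 1` and `f(N) = 0`. -/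
theorem stmt14 (N M : ℕ) (hMN : M + 1 ≤ N) (f : ℕ → ℝ)
    (hf : StrictAntiOn f (Set.Icc M N)) (hfM : f M = 1) (hfN : f N = 0)
    (C : ℕ → ℝ) (hCM : C M = 1)
    (hC : ∀ y, M + 1 ≤ y → y ≤ N - 1 →
      C y = (1 / f y) * (1 - ∑ y' ∈ Finset.Ico M y, C y' * f y)) :
    ∀ y, M ≤ y → y ≤ N - 1 → 0 < C y :=
  stmt14_general N M f hf hfM hfN C hCM hC
end
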